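/- arXiv:2402.14557 — 11 statements merged into one kernel-verified Lean document; each statement's English description precedes it below -/
import Mathlib

section
/- Let K be a category that has kernel pairs and coequalizers of kernel pairs. If G is an object of K with copowers which is a regular projective and a strong generator, then G is a regular generator; that is, for every object X the canonical morphism [h] : ∐_{h ∈ K(G,X)} G → X is a regular epimorphism (it is the coequalizer of its own kernel pair). -/
open CategoryTheory

universe v u

namespace Paper

variable {K : Type u} [Category.{v} K]

/-- `C` together with the injections `ι` is a coproduct of the family `Y`. -/
def IsCoproductOf {M : Type v} (Y : M → K) (C : K) (ι : ∀ m, Y m ⟶ C) : Prop :=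
  ∀ (Z : K) (g : ∀ m, Y m ⟶ Z), ∃! d : C ⟶ Z, ∀ m, ι m ≫ d = g m

/-- `G` has copowers: all set-indexed coproducts of copies of `G` exist. -/
def HasCopowers (G : K) : Prop :=
  ∀ M : Type v, ∃ (C : K) (ι : M → (G ⟶ C)), IsCoproductOf (fun _ : M => G) C ι

/-- `e` is a coequalizer of the pair `r0, r1`. -/
def IsCoequalizerOf {R A B : K} (r0 r1 : R ⟶ A) (e : A ⟶ B) : Prop :=
  r0 ≫ e = r1 ≫ e ∧
    ∀ (Z : K) (f : A ⟶ Z), r0 ≫ f = r1 ≫ f → ∃! g : B ⟶ Z, e ≫ g = f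

/-- `e` is a regular epimorphism: a coequalizer of some parallel pair. -/
def IsRegEpi {A B : K} (e : A ⟶ B) : Prop :=
  ∃ (R : K) (r0 r1 : R ⟶ A), IsCoequalizerOf r0 r1 e

/-- `r0, r1` is a kernel pair of `f`. -/
def IsKernelPairOf {R A B : K} (r0 r1 : R ⟶ A) (f : A ⟶ B) : Prop :=
  r0 ≫ f = r1 ≫ f ∧
    ∀ (S : K) (s0 s1 : S ⟶ A), s0 ≫ f = s1 ≫ f →
      ∃! t : S ⟶ R, t ≫ r0 = s0 ∧ t ≫ r1 = s1

def HasKernelPairs (K : Type u) [Category.{v} K] : Prop :=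
  ∀ (A B : K) (f : A ⟶ B), ∃ (R : K) (r0 r1 : R ⟶ A), IsKernelPairOf r0 r1 f

def HasCoequalizersOfKernelPairs (K : Type u) [Category.{v} K] : Prop :=
  ∀ (R A B : K) (f : A ⟶ B) (r0 r1 : R ⟶ A), IsKernelPairOf r0 r1 f →
    ∃ (C : K) (e : A ⟶ C), IsCoequalizerOf r0 r1 e

/-- `e` is a strong (extremal) epimorphism. -/
def IsExtremalEpi {A B : K} (e : A ⟶ B) : Prop :=
  Epi e ∧ ∀ (C : K) (g : A ⟶ C) (m : C ⟶ B), Mono m → g ≫ m = e → IsIso m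

/-- `G` is a generator: every canonical morphism `[h] : ∐_{h : G ⟶ X} G ⟶ X` is epic. -/
def GeneratorP (G : K) : Prop :=
  ∀ (X C : K) (ι : (G ⟶ X) → (G ⟶ C)), IsCoproductOf (fun _ : (G ⟶ X) => G) C ι →
    ∀ d : C ⟶ X, (∀ h, ι h ≫ d = h) → Epi d

/-- `G` is a strong generator: every canonical morphism is a strong (extremal) epimorphism. -/
def StrongGenerator (G : K) : Prop :=
  ∀ (X C : K) (ι : (G ⟶ X) → (G ⟶ C)), IsCoproductOf (fun _ : (G ⟶ X) => G) C ι →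
    ∀ d : C ⟶ X, (∀ h, ι h ≫ d = h) → IsExtremalEpi d

/-- `G` is a regular generator: every canonical morphism is a regular epimorphism. -/
def RegularGenerator (G : K) : Prop :=
  ∀ (X C : K) (ι : (G ⟶ X) → (G ⟶ C)), IsCoproductOf (fun _ : (G ⟶ X) => G) C ι →
    ∀ d : C ⟶ X, (∀ h, ι h ≫ d = h) → IsRegEpi d

/-- `G` is a regular projective: morphisms from `G` factor through regular epimorphisms. -/
def RegularProjective (G : K) : Prop :=
  ∀ (A B : K) (e : A ⟶ B), IsRegEpi e → ∀ g : G ⟶ B, ∃ f : G ⟶ A, f ≫ e = g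

/-- `G` is abstractly finite: every morphism from `G` into a copower `M·G` factors
through the subcopower induced by a finite subset `M₀ ⊆ M`. -/
def AbstractlyFinite (G : K) : Prop :=
  ∀ (M : Type v) (C : K) (ι : M → (G ⟶ C)), IsCoproductOf (fun _ : M => G) C ι →
    ∀ f : G ⟶ C, ∃ M₀ : Set M, M₀.Finite ∧
      ∀ (C₀ : K) (ι₀ : M₀ → (G ⟶ C₀)) (u : C₀ ⟶ C),
        IsCoproductOf (fun _ : M₀ => G) C₀ ι₀ → (∀ m : M₀, ι₀ m ≫ u = ι m.1) →
          ∃ g : G ⟶ C₀, g ≫ u = f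

/-- `G` is finitely generated: its hom-functor `K(G,−) : K ⥤ Set` preserves colimits of
directed diagrams all of whose connecting morphisms are monomorphisms. -/
def FinitelyGenerated (G : K) : Prop :=
  ∀ (J : Type v) [Preorder J], IsDirected J (· ≤ ·) → Nonempty J →
    ∀ (D : J ⥤ K), (∀ (i j : J) (f : i ⟶ j), Mono (D.map f)) →
      ∀ (c : Limits.Cocone D), Nonempty (Limits.IsColimit c) →
        Nonempty (Limits.IsColimit ((coyoneda.obj (Opposite.op G)).mapCocone c))

/-- The pair `s0, s1` factorizes through the relation `r0, r1`. -/
def Factors {R A S : K} (r0 r1 : R ⟶ A) (s0 s1 : S ⟶ A) : Prop :=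
  ∃ t : S ⟶ R, t ≫ r0 = s0 ∧ t ≫ r1 = s1

def CollectivelyMonic {R A : K} (r0 r1 : R ⟶ A) : Prop :=
  ∀ (S : K) (f g : S ⟶ R), f ≫ r0 = g ≫ r0 → f ≫ r1 = g ≫ r1 → f = g

/-- A congruence: a collectively monic pair which is reflexive, symmetric and transitive. -/
def IsCongruence {R A : K} (r0 r1 : R ⟶ A) : Prop :=
  CollectivelyMonic r0 r1 ∧
  (∀ (S : K) (s : S ⟶ A), Factors r0 r1 s s) ∧
  (∀ (S : K) (s s' : S ⟶ A), Factors r0 r1 s s' → Factors r0 r1 s' s) ∧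
  (∀ (S : K) (s s' s'' : S ⟶ A),
    Factors r0 r1 s s' → Factors r0 r1 s' s'' → Factors r0 r1 s s'')

def HasCoequalizersOfCongruences (K : Type u) [Category.{v} K] : Prop :=
  ∀ (R A : K) (r0 r1 : R ⟶ A), IsCongruence r0 r1 →
    ∃ (C : K) (e : A ⟶ C), IsCoequalizerOf r0 r1 e

/-- `K` has effective congruences: every congruence is a kernel pair. -/
def EffectiveCongruences (K : Type u) [Category.{v} K] : Prop :=
  ∀ (R A : K) (r0 r1 : R ⟶ A), IsCongruence r0 r1 →
    ∃ (B : K) (f : A ⟶ B), IsKernelPairOf r0 r1 f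

/-- A coequalizer diagram in `Set`. -/
def IsCoequalizerOfTypes {R A C : Type v} (u v : R → A) (q : A → C) : Prop :=
  q ∘ u = q ∘ v ∧
    ∀ {Z : Type v} (h : A → Z), h ∘ u = h ∘ v → ∃! k : C → Z, k ∘ q = h

/-- `G` is effective: its hom-functor sends coequalizers of congruences to
coequalizers in `Set`. -/
def EffectiveObject (G : K) : Prop :=
  ∀ (R A : K) (r0 r1 : R ⟶ A), IsCongruence r0 r1 →
    ∀ (C : K) (e : A ⟶ C), IsCoequalizerOf r0 r1 e →
      IsCoequalizerOfTypes (fun f : G ⟶ R => f ≫ r0) (fun f : G ⟶ R => f ≫ r1)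
        (fun g : G ⟶ A => g ≫ e)

/-- The square with projections `f', e'` is a pullback of `e` along `f`. -/
def IsPullbackOf {P A B Q : K} (f' : P ⟶ A) (e' : P ⟶ B) (e : A ⟶ Q) (f : B ⟶ Q) : Prop :=
  f' ≫ e = e' ≫ f ∧
    ∀ (S : K) (a : S ⟶ A) (b : S ⟶ B), a ≫ e = b ≫ f →
      ∃! t : S ⟶ P, t ≫ f' = a ∧ t ≫ e' = b

/-- A varietal generator: a strong generator with copowers which is abstractly finite
and regularly projective. -/
def VarietalGenerator (G : K) : Prop :=
  HasCopowers G ∧ StrongGenerator G ∧ AbstractlyFinite G ∧ RegularProjective G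

/-- Barr-exactness: kernel pairs and their coequalizers exist, congruences are effective,
and regular epimorphisms are stable under pullback. -/
def BarrExact (K : Type u) [Category.{v} K] : Prop :=
  HasKernelPairs K ∧ HasCoequalizersOfKernelPairs K ∧ EffectiveCongruences K ∧
    ∀ (P A B Q : K) (f' : P ⟶ A) (e' : P ⟶ B) (e : A ⟶ Q) (f : B ⟶ Q),
      IsPullbackOf f' e' e f → IsRegEpi e → IsRegEpi e'

/-- with kernel pairs and coequalizers of kernel pairs, a regularly projective
strong generator with copowers is a regular generator; each canonical morphism is the
coequalizer of its own kernel pair. -/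
theorem stmt0 {K : Type u} [Category.{v} K]
    (hkp : HasKernelPairs K) (hck : HasCoequalizersOfKernelPairs K)
    (G : K) (hcop : HasCopowers G) (hproj : RegularProjective G)
    (hstrong : StrongGenerator G) :
    RegularGenerator G ∧
      ∀ (X C : K) (ι : (G ⟶ X) → (G ⟶ C)), IsCoproductOf (fun _ : (G ⟶ X) => G) C ι →
        ∀ d : C ⟶ X, (∀ h, ι h ≫ d = h) →
          ∀ (R : K) (r0 r1 : R ⟶ C), IsKernelPairOf r0 r1 d → IsCoequalizerOf r0 r1 d := by
  -- Morphisms from `G` are jointly epic (separation), since canonicals are epi.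
  have sep : ∀ (S Q' : K) (u v : S ⟶ Q'), (∀ k : G ⟶ S, k ≫ u = k ≫ v) → u = v := by
    intro S Q' u v hkuv
    obtain ⟨C', ι', hC'⟩ := hcop (G ⟶ S)
    obtain ⟨d', hd', -⟩ := hC' S (fun k => k)
    have hext := hstrong S C' ι' hC' d' hd'
    have hdd : d' ≫ u = d' ≫ v := by
      obtain ⟨w, -, huniq⟩ := hC' Q' (fun k => k ≫ u)
      have h1 : d' ≫ u = w := huniq _ (fun k => by rw [← Category.assoc, hd'])
      have h2 : d' ≫ v = w := huniq _ (fun k => by rw [← Category.assoc, hd', ← hkuv])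
      rw [h1, h2]
    haveI : Epi d' := hext.1
    exact (cancel_epi d').mp hdd
  have main : ∀ (X C : K) (ι : (G ⟶ X) → (G ⟶ C)),
      IsCoproductOf (fun _ : (G ⟶ X) => G) C ι →
      ∀ d : C ⟶ X, (∀ h, ι h ≫ d = h) →
      ∀ (R : K) (r0 r1 : R ⟶ C), IsKernelPairOf r0 r1 d → IsCoequalizerOf r0 r1 d := by
    intro X C ι hC d hd R r0 r1 hkpd
    obtain ⟨heq, hfac⟩ := hkpd
    obtain ⟨Q, e, he⟩ := hck R C X d r0 r1 ⟨heq, hfac⟩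
    obtain ⟨m, hm, -⟩ := he.2 X d heq
    have hre : IsRegEpi e := ⟨R, r0, r1, he⟩
    have hmono : Mono m := by
      constructor
      intro S u v huv
      apply sep
      intro k
      obtain ⟨a, ha⟩ := hproj C Q e hre (k ≫ u)
      obtain ⟨b, hb⟩ := hproj C Q e hre (k ≫ v)
      have hab : a ≫ d = b ≫ d := by
        rw [← hm, ← Category.assoc, ← Category.assoc, ha, hb,
          Category.assoc, Category.assoc, huv]
      obtain ⟨t, ⟨ht0, ht1⟩, -⟩ := hfac G a b hab
      calc k ≫ u = a ≫ e := ha.symm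
        _ = t ≫ r0 ≫ e := by rw [← ht0, Category.assoc]
        _ = t ≫ r1 ≫ e := by rw [he.1]
        _ = b ≫ e := by rw [← Category.assoc, ht1]
        _ = k ≫ v := hb
    have hext := hstrong X C ι hC d hd
    haveI hiso : IsIso m := hext.2 Q e m hmono hm
    refine ⟨heq, ?_⟩
    intro Z f hf
    obtain ⟨g', hg', hg'u⟩ := he.2 Z f hf
    refine ⟨inv m ≫ g', ?_, ?_⟩
    · show d ≫ (inv m ≫ g') = f
      rw [← hm, Category.assoc, IsIso.hom_inv_id_assoc, hg']
    · intro g hg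
      have hmg : m ≫ g = g' := hg'u _ (show e ≫ m ≫ g = f by rw [← Category.assoc, hm, hg])
      rw [← hmg, IsIso.inv_hom_id_assoc]
  constructor
  · intro X C ι hC d hd
    obtain ⟨R, r0, r1, hkpd⟩ := hkp C X d
    exact ⟨R, r0, r1, main X C ι hC d hd R r0 r1 hkpd⟩
  · exact main

end Paper
end

section
/- Let K be a cocomplete category. Every finitely generated object G of K (i.e., one whose hom-functor K(G,−) : K → Set preserves colimits of directed diagrams all of whose connecting morphisms are monomorphisms) is abstractly finite: every morphism from G to a copower M·G factorizes through the subcopower M₀·G induced by some finite subset M₀ ⊆ M. -/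
open CategoryTheory

universe v u

namespace Paper

variable {K : Type u} [Category.{v} K]

/-
A copower `M·G` with `M` nonempty is the directed colimit of its subcopowers `S·G`, `S` ranging
over the nonempty finite subsets of `M`, and the connecting maps `S·G ⟶ T·G` are split
monomorphisms: each copy of `G` indexed by `T` can be folded back onto a copy indexed by `S`.
Since `K(G,−)` preserves this colimit, every `G ⟶ M·G` factors through some `S·G`.
For `M` empty, `M·G` is initial and `M₀ = ∅` works.
-/

open Limits CoproductsFromFiniteFiltered

lemma IsCoproductOf.hom_ext {M : Type v} {Y : M → K} {C : K} {ι : ∀ m, Y m ⟶ C}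
    (h : IsCoproductOf Y C ι) {Z : K} {d d' : C ⟶ Z} (hd : ∀ m, ι m ≫ d = ι m ≫ d') :
    d = d' := by
  obtain ⟨_, -, huniq⟩ := h Z (fun m => ι m ≫ d')
  exact (huniq d hd).trans (huniq d' fun _ => rfl).symm

lemma IsCoproductOf.isIso_sigmaDesc {M : Type v} {Y : M → K} [HasCoproduct Y] {C : K}
    {ι : ∀ m, Y m ⟶ C} (h : IsCoproductOf Y C ι) : IsIso (Sigma.desc ι) :=
  (Cofan.nonempty_isColimit_iff_isIso_sigmaDesc (Cofan.mk C ι)).mp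
    ⟨Cofan.IsColimit.mk _ (fun t => (h t.pt t.inj).exists.choose)
      (fun t => (h t.pt t.inj).exists.choose_spec)
      (fun t _ hm => (h t.pt t.inj).unique hm (h t.pt t.inj).exists.choose_spec)⟩

lemma isSplitMono_sigmaDesc_ι_of_injective {S T : Type*} [Nonempty S] {e : S → T}
    (he : Function.Injective e) (X : K) [HasCoproduct fun _ : S => X]
    [HasCoproduct fun _ : T => X] :
    IsSplitMono (Sigma.desc fun s => Sigma.ι (fun _ : T => X) (e s)) :=
  IsSplitMono.mk' ⟨Sigma.desc fun t => Sigma.ι (fun _ : S => X) (Function.invFun e t), by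
    ext s
    simp [Function.leftInverse_invFun he s]⟩

instance {α : Type*} : IsDirectedOrder {S : Finset α // S.Nonempty} := by
  classical
  exact ⟨fun S T => ⟨⟨S.1 ∪ T.1, S.2.mono Finset.subset_union_left⟩,
    Finset.subset_union_left, Finset.subset_union_right⟩⟩

lemma final_functor_coe_nonemptyFinset {α : Type*} [Nonempty α] :
    (Subtype.mono_coe fun S : Finset α => S.Nonempty).functor.Final := by
  classical
  rw [Monotone.final_functor_iff]
  obtain ⟨a⟩ := ‹Nonempty α›
  exact fun S => ⟨⟨insert a S, Finset.insert_nonempty a S⟩, Finset.subset_insert a S⟩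

lemma mono_liftToFinsetObj_map_of_nonempty [HasFiniteCoproducts K] {α : Type*} (X : K)
    {S T : Finset (Discrete α)} (h : S ⟶ T) (hS : S.Nonempty) :
    Mono ((liftToFinsetObj (Discrete.functor fun _ : α => X)).map h) := by
  have : Nonempty S := hS.to_subtype
  exact (isSplitMono_sigmaDesc_ι_of_injective (e := Set.inclusion h.le)
    (Set.inclusion_injective h.le) X).mono

lemma FinitelyGenerated.exists_factor_sigmaDesc_finset [HasColimits K] {G : K}
    (hfg : FinitelyGenerated G) {M : Type v} [Nonempty M] (f : G ⟶ ∐ fun _ : M => G) :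
    ∃ (S : Finset (Discrete M)) (g : G ⟶ ∐ fun _ : S => G),
      g ≫ Sigma.desc (fun s => Sigma.ι (fun _ : M => G) s.1.as) = f := by
  obtain ⟨m⟩ := ‹Nonempty M›
  have : Nonempty (Discrete M) := ⟨⟨m⟩⟩
  let Φ := (Subtype.mono_coe fun S : Finset (Discrete M) => S.Nonempty).functor
  have : Φ.Final := final_functor_coe_nonemptyFinset
  let c := (finiteSubcoproductsCocone fun _ : M => G).whisker Φ
  have hc : IsColimit c :=
    (Functor.Final.isColimitWhiskerEquiv Φ _).symm (isColimitFiniteSubproductsCocone _)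
  obtain ⟨hc'⟩ := hfg {S : Finset (Discrete M) // S.Nonempty} inferInstance
    ⟨⟨{⟨m⟩}, Finset.singleton_nonempty _⟩⟩ _
    (fun S _ h => mono_liftToFinsetObj_map_of_nonempty G (Φ.map h) S.2) c ⟨hc⟩
  obtain ⟨S, g, hg⟩ := Types.jointly_surjective_of_isColimit hc' f
  exact ⟨S.1, g, hg⟩

lemma FinitelyGenerated.exists_factor_finite_subcopower [HasColimits K] {G : K}
    (hfg : FinitelyGenerated G) {M : Type v} {C : K} {ι : M → (G ⟶ C)}
    (hC : IsCoproductOf (fun _ : M => G) C ι) (f : G ⟶ C) :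
    ∃ (S : Finset (Discrete M)) (g : G ⟶ ∐ fun _ : S => G),
      g ≫ Sigma.desc (fun s => ι s.1.as) = f := by
  cases isEmpty_or_nonempty M with
  | inl hM =>
    obtain ⟨d, -⟩ := hC (∐ fun _ : (∅ : Finset (Discrete M)) => G) isEmptyElim
    have hC_initial : d ≫ Sigma.desc (fun s => ι s.1.as) = 𝟙 C := hC.hom_ext isEmptyElim
    exact ⟨∅, f ≫ d, by rw [Category.assoc, hC_initial, Category.comp_id]⟩
  | inr hM =>
    have := hC.isIso_sigmaDesc
    obtain ⟨S, g, hg⟩ := hfg.exists_factor_sigmaDesc_finset (f ≫ inv (Sigma.desc ι))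
    refine ⟨S, g, ?_⟩
    calc g ≫ Sigma.desc (fun s => ι s.1.as)
        = (g ≫ Sigma.desc fun s => Sigma.ι (fun _ : M => G) s.1.as) ≫ Sigma.desc ι := by
          rw [Category.assoc]
          congr 1
          ext
          simp
      _ = f := by rw [hg, Category.assoc, IsIso.inv_hom_id, Category.comp_id]

/-- in a cocomplete category, every finitely generated object is
abstractly finite. -/
theorem stmt1 {K : Type u} [Category.{v} K] [Limits.HasColimits K]
    (G : K) (hfg : FinitelyGenerated G) : AbstractlyFinite G := by
  intro M C ι hC f
  obtain ⟨S, g, rfl⟩ := hfg.exists_factor_finite_subcopower hC f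
  refine ⟨Discrete.as '' S, S.finite_toSet.image _, fun C₀ ι₀ u _ hu => ?_⟩
  refine ⟨g ≫ Sigma.desc fun s => ι₀ ⟨s.1.as, Set.mem_image_of_mem _ s.2⟩, ?_⟩
  rw [Category.assoc]
  congr 1
  ext
  simp [hu]

end Paper
end

section
/- Let K be a category with kernel pairs and coequalizers of kernel pairs, and let G be an object with copowers which is a regular projective and a strong generator. Then K has regular factorizations: every morphism f : A → B factors as f = m ∘ c where c is a regular epimorphism (the coequalizer of the kernel pair of f) and m is a monomorphism. -/
open CategoryTheory

universe v u

namespace Paper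

variable {K : Type u} [Category.{v} K]

/-- regular factorizations exist: every morphism factors as a regular
epimorphism (the coequalizer of its kernel pair) followed by a monomorphism. -/
theorem stmt3 {K : Type u} [Category.{v} K]
    (hkp : HasKernelPairs K) (hck : HasCoequalizersOfKernelPairs K)
    (G : K) (hcop : HasCopowers G) (hproj : RegularProjective G)
    (hstrong : StrongGenerator G) :
    ∀ (A B : K) (f : A ⟶ B), ∃ (C : K) (c : A ⟶ C) (m : C ⟶ B),
      c ≫ m = f ∧ IsRegEpi c ∧ Mono m ∧
        ∃ (R : K) (r0 r1 : R ⟶ A), IsKernelPairOf r0 r1 f ∧ IsCoequalizerOf r0 r1 c := by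
  intro A B f
  obtain ⟨R, r0, r1, hkpf⟩ := hkp A B f
  obtain ⟨C, e, hcoeq⟩ := hck R A B f r0 r1 hkpf
  obtain ⟨m, hm, -⟩ := hcoeq.2 B f hkpf.1
  have hregepi : IsRegEpi e := ⟨R, r0, r1, hcoeq⟩
  -- morphisms from G are equalized by m
  have hG : ∀ u v : G ⟶ C, u ≫ m = v ≫ m → u = v := by
    intro u v huv
    obtain ⟨u', hu'⟩ := hproj A C e hregepi u
    obtain ⟨v', hv'⟩ := hproj A C e hregepi v
    have hf : u' ≫ f = v' ≫ f := by
      rw [← hm, ← Category.assoc, ← Category.assoc, hu', hv', huv]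
    obtain ⟨t, ⟨ht0, ht1⟩, -⟩ := hkpf.2 G u' v' hf
    calc u = u' ≫ e := hu'.symm
      _ = t ≫ (r0 ≫ e) := by rw [← ht0, Category.assoc]
      _ = t ≫ (r1 ≫ e) := by rw [hcoeq.1]
      _ = v' ≫ e := by rw [← ht1, Category.assoc]
      _ = v := hv'
  have hmono : Mono m := by
    constructor
    intro Z x y hxy
    obtain ⟨Cp, ι, hcp⟩ := hcop (G ⟶ Z)
    obtain ⟨d, hd, -⟩ := hcp Z (fun h => h)
    have hepi : Epi d := (hstrong Z Cp ι hcp d hd).1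
    have heq : d ≫ x = d ≫ y := by
      obtain ⟨w, -, huniq⟩ := hcp C (fun h => h ≫ x)
      have h1 : d ≫ x = w := huniq _ (fun h => by rw [← Category.assoc, hd])
      have h2 : d ≫ y = w := by
        refine huniq _ (fun h => ?_)
        rw [← Category.assoc, hd]
        exact (hG (h ≫ x) (h ≫ y) (by rw [Category.assoc, Category.assoc, hxy])).symm
      rw [h1, h2]
    exact hepi.left_cancellation x y heq
  exact ⟨C, e, m, hm, hregepi, hmono, R, r0, r1, hkpf, hcoeq⟩

end Paper
end

section
/- Let K be a category with kernel pairs and coequalizers of kernel pairs, and let G be an object with copowers which is a regular projective and a strong generator. Then regular epimorphisms in K are stable under pullback: in any pullback square with one side a regular epimorphism e, the side e' opposite to e is also a regular epimorphism. -/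
open CategoryTheory

universe v u

namespace Paper

variable {K : Type u} [Category.{v} K]

/-- If `G` is a strong generator with copowers, then `G`-elements jointly cancel. -/
theorem cancel_of_strong {K : Type u} [Category.{v} K] {G : K}
    (hcop : HasCopowers G) (hstrong : StrongGenerator G)
    {X Z : K} (u v : X ⟶ Z) (hw : ∀ g : G ⟶ X, g ≫ u = g ≫ v) : u = v := by
  obtain ⟨C, ι, hC⟩ := hcop (G ⟶ X)
  obtain ⟨d, hd, -⟩ := hC X (fun h => h)
  have hepi : Epi d := (hstrong X C ι hC d hd).1
  have hdu : d ≫ u = d ≫ v := by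
    obtain ⟨w, hw', huniq⟩ := hC Z (fun g => g ≫ u)
    have h1 : d ≫ u = w := huniq _ (fun m => by rw [← Category.assoc, hd])
    have h2 : d ≫ v = w := huniq _ (fun m => by rw [← Category.assoc, hd, ← hw m])
    rw [h1, h2]
  exact (cancel_epi d).mp hdu

/-- regular epimorphisms are stable under pullback. -/
theorem stmt4 {K : Type u} [Category.{v} K]
    (hkp : HasKernelPairs K) (hck : HasCoequalizersOfKernelPairs K)
    (G : K) (hcop : HasCopowers G) (hproj : RegularProjective G)
    (hstrong : StrongGenerator G) :
    ∀ (P A B Q : K) (f' : P ⟶ A) (e' : P ⟶ B) (e : A ⟶ Q) (f : B ⟶ Q),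
      IsPullbackOf f' e' e f → IsRegEpi e → IsRegEpi e' := by
  intro P A B Q f' e' e f hpb he
  -- every morphism G ⟶ B factors through e'
  have hlift : ∀ g : G ⟶ B, ∃ t : G ⟶ P, t ≫ e' = g := by
    intro g
    obtain ⟨a, ha⟩ := hproj A Q e he (g ≫ f)
    obtain ⟨t, ⟨ht1, ht2⟩, -⟩ := hpb.2 G a g ha
    exact ⟨t, ht2⟩
  -- e' is an extremal epi
  have hext : IsExtremalEpi e' := by
    constructor
    · constructor
      intro Z u v huv
      apply cancel_of_strong hcop hstrong
      intro g
      obtain ⟨t, ht⟩ := hlift g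
      rw [← ht, Category.assoc, Category.assoc, huv]
    · intro C g m hm hgm
      obtain ⟨Cp, ι, hCp⟩ := hcop (G ⟶ B)
      obtain ⟨d, hd, -⟩ := hCp B (fun h => h)
      have hde := hstrong B Cp ι hCp d hd
      choose t ht using hlift
      obtain ⟨d', hd', -⟩ := hCp C (fun h => t h ≫ g)
      have hdm : d' ≫ m = d := by
        obtain ⟨w, hw, huniq⟩ := hCp B (fun h => h)
        rw [huniq (d' ≫ m) ?_, huniq d hd]
        intro h
        rw [← Category.assoc, hd' h, Category.assoc, hgm, ht h]
      exact hde.2 C d' m hm hdm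
  -- kernel pair of e' and its coequalizer
  obtain ⟨R, r0, r1, hkpe⟩ := hkp P B e'
  obtain ⟨C, q, hq⟩ := hck R P B e' r0 r1 hkpe
  obtain ⟨m, hqm, -⟩ := hq.2 B e' hkpe.1
  have hqreg : IsRegEpi q := ⟨R, r0, r1, hq⟩
  -- m is a monomorphism
  have hm : Mono m := by
    constructor
    intro S x y hxy
    apply cancel_of_strong hcop hstrong
    intro h
    obtain ⟨xh, hxh⟩ := hproj P C q hqreg (h ≫ x)
    obtain ⟨yh, hyh⟩ := hproj P C q hqreg (h ≫ y)
    have hxy' : xh ≫ e' = yh ≫ e' := by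
      rw [← hqm, ← Category.assoc, hxh, ← Category.assoc, hyh,
        Category.assoc, Category.assoc, hxy]
    obtain ⟨t, ⟨ht0, ht1⟩, -⟩ := hkpe.2 G xh yh hxy'
    calc h ≫ x = xh ≫ q := hxh.symm
      _ = t ≫ (r0 ≫ q) := by rw [← ht0, Category.assoc]
      _ = t ≫ (r1 ≫ q) := by rw [hq.1]
      _ = yh ≫ q := by rw [← ht1, Category.assoc]
      _ = h ≫ y := hyh
  have hiso : IsIso m := hext.2 C q m hm hqm
  -- conclude: e' is the coequalizer of r0, r1
  refine ⟨R, r0, r1, ?_, ?_⟩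
  · rw [← hqm, ← Category.assoc, ← Category.assoc, hq.1]
  · intro Z g hg
    obtain ⟨w, hw, huniq⟩ := hq.2 Z g hg
    refine ⟨inv m ≫ w, ?_, ?_⟩
    · show e' ≫ (inv m ≫ w) = g
      rw [← hqm, Category.assoc, IsIso.hom_inv_id_assoc, hw]
    · intro g' hg'
      have : m ≫ g' = w := by
        apply huniq
        rw [← Category.assoc, hqm, hg']
      rw [← this, IsIso.inv_hom_id_assoc]

end Paper
end

section
/- Let G be a regular generator with copowers in a category K. Then every congruence with respect to G is a congruence: if r0, r1 : R → A is a collectively monic pair such that the set-theoretical relation {(r0∘f, r1∘f) : f ∈ K(G,R)} on the hom-set K(G,A) is an equivalence relation, then the pair r0, r1 is reflexive, symmetric and transitive in the categorical sense. -/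
open CategoryTheory

universe v u

namespace Paper

variable {K : Type u} [Category.{v} K]

theorem key_factor {K : Type u} [Category.{v} K]
    (G : K) (hcop : HasCopowers G) (hreg : RegularGenerator G)
    {R A S : K} (r0 r1 : R ⟶ A) (hmono : CollectivelyMonic r0 r1)
    (s0 s1 : S ⟶ A)
    (hpt : ∀ h : G ⟶ S, ∃ f : G ⟶ R, f ≫ r0 = h ≫ s0 ∧ f ≫ r1 = h ≫ s1) :
    Factors r0 r1 s0 s1 := by
  obtain ⟨C, ι, hC⟩ := hcop (G ⟶ S)
  obtain ⟨d, hd, -⟩ := hC S (fun h => h)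
  obtain ⟨W, u0, u1, hu, hcoeq⟩ := hreg S C ι hC d hd
  choose f hf0 hf1 using hpt
  obtain ⟨k, hk, -⟩ := hC R f
  have hk0 : k ≫ r0 = d ≫ s0 := by
    obtain ⟨z, -, hz⟩ := hC A (fun h => h ≫ s0)
    have h1 : k ≫ r0 = z := hz _ (fun h => by rw [← Category.assoc, hk, hf0])
    have h2 : d ≫ s0 = z := hz _ (fun h => by rw [← Category.assoc, hd])
    rw [h1, h2]
  have hk1 : k ≫ r1 = d ≫ s1 := by
    obtain ⟨z, -, hz⟩ := hC A (fun h => h ≫ s1)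
    have h1 : k ≫ r1 = z := hz _ (fun h => by rw [← Category.assoc, hk, hf1])
    have h2 : d ≫ s1 = z := hz _ (fun h => by rw [← Category.assoc, hd])
    rw [h1, h2]
  have huk : u0 ≫ k = u1 ≫ k := by
    apply hmono
    · rw [Category.assoc, Category.assoc, hk0, ← Category.assoc, hu, Category.assoc]
    · rw [Category.assoc, Category.assoc, hk1, ← Category.assoc, hu, Category.assoc]
  obtain ⟨t, ht, -⟩ := hcoeq R k huk
  refine ⟨t, ?_, ?_⟩
  · have hds : u0 ≫ (d ≫ s0) = u1 ≫ (d ≫ s0) := by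
      rw [← Category.assoc, hu, Category.assoc]
    obtain ⟨g, -, hg⟩ := hcoeq A (d ≫ s0) hds
    have h1 : t ≫ r0 = g := hg _ (show d ≫ (t ≫ r0) = _ by rw [← Category.assoc, ht, hk0])
    have h2 : s0 = g := hg _ rfl
    rw [h1, h2]
  · have hds : u0 ≫ (d ≫ s1) = u1 ≫ (d ≫ s1) := by
      rw [← Category.assoc, hu, Category.assoc]
    obtain ⟨g, -, hg⟩ := hcoeq A (d ≫ s1) hds
    have h1 : t ≫ r1 = g := hg _ (show d ≫ (t ≫ r1) = _ by rw [← Category.assoc, ht, hk1])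
    have h2 : s1 = g := hg _ rfl
    rw [h1, h2]

/-- if `G` is a regular generator with copowers, then every congruence
with respect to `G` is a congruence. -/
theorem stmt5 {K : Type u} [Category.{v} K]
    (G : K) (hcop : HasCopowers G) (hreg : RegularGenerator G)
    {R A : K} (r0 r1 : R ⟶ A) (hmono : CollectivelyMonic r0 r1)
    (heq : _root_.Equivalence
      (fun h h' : G ⟶ A => ∃ f : G ⟶ R, f ≫ r0 = h ∧ f ≫ r1 = h')) :
    IsCongruence r0 r1 := by
  refine ⟨hmono, ?_, ?_, ?_⟩
  · intro S s
    exact key_factor G hcop hreg r0 r1 hmono s s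
      (fun h => heq.refl (h ≫ s))
  · rintro S s s' ⟨t, ht0, ht1⟩
    exact key_factor G hcop hreg r0 r1 hmono s' s
      (fun h => heq.symm ⟨h ≫ t, by rw [Category.assoc, ht0], by rw [Category.assoc, ht1]⟩)
  · rintro S s s' s'' ⟨t, ht0, ht1⟩ ⟨w, hw0, hw1⟩
    exact key_factor G hcop hreg r0 r1 hmono s s''
      (fun h => heq.trans
        ⟨h ≫ t, by rw [Category.assoc, ht0], by rw [Category.assoc, ht1]⟩
        ⟨h ≫ w, by rw [Category.assoc, hw0], by rw [Category.assoc, hw1]⟩)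

end Paper
end

section
/- Let K be a category with kernel pairs and coequalizers of congruences, and let G be a regular projective strong generator with copowers. Then G is effective (its hom-functor K(G,−) : K → Set sends coequalizers of congruences to coequalizers in Set) if and only if K has effective congruences (every congruence is the kernel pair of some morphism). -/
open CategoryTheory

universe v u

namespace Paper

variable {K : Type u} [Category.{v} K]

/-- for a regularly projective strong generator with copowers, in a
category with kernel pairs and coequalizers of congruences, `G` is effective iff
the category has effective congruences. -/
theorem stmt6 {K : Type u} [Category.{v} K]
    (hkp : HasKernelPairs K) (hcc : HasCoequalizersOfCongruences K)
    (G : K) (hcop : HasCopowers G) (hproj : RegularProjective G)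
    (hstrong : StrongGenerator G) :
    EffectiveObject G ↔ EffectiveCongruences K := by
  constructor
  · -- Effective object ⇒ effective congruences
    intro heff R A r0 r1 hcong
    obtain ⟨C, e, he⟩ := hcc R A r0 r1 hcong
    -- kernel pair of e
    obtain ⟨P, p0, p1, hP⟩ := hkp A C e
    -- p0, p1 collectively monic
    have hPmono : CollectivelyMonic p0 p1 := by
      intro S f g h0 h1
      have hfe : (f ≫ p0) ≫ e = (f ≫ p1) ≫ e := by
        simp only [Category.assoc, hP.1]
      obtain ⟨t, _, hu⟩ := hP.2 S (f ≫ p0) (f ≫ p1) hfe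
      have hf := hu f ⟨rfl, rfl⟩
      have hg := hu g ⟨h0.symm, h1.symm⟩
      rw [hf, hg]
    -- comparison j : R ⟶ P
    obtain ⟨j, ⟨hj0, hj1⟩, _⟩ := hP.2 R r0 r1 he.1
    -- use effectiveness with the quotient by the (equivalence) relation Factors
    have key : ∀ g g' : G ⟶ A, g ≫ e = g' ≫ e → Factors r0 r1 g g' := by
      intro g g' hgg
      have hcoeq := heff R A r0 r1 hcong C e he
      let s : Setoid (G ⟶ A) :=
        { r := fun a b => Factors r0 r1 a b
          iseqv := ⟨fun a => hcong.2.1 G a, fun h => hcong.2.2.1 G _ _ h,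
            fun h h' => hcong.2.2.2 G _ _ _ h h'⟩ }
      have hh : (Quotient.mk s) ∘ (fun f : G ⟶ R => f ≫ r0)
          = (Quotient.mk s) ∘ (fun f : G ⟶ R => f ≫ r1) := by
        funext t
        exact Quotient.sound ⟨t, rfl, rfl⟩
      obtain ⟨k, hk, _⟩ := hcoeq.2 (Quotient.mk s) hh
      have h1 : k (g ≫ e) = Quotient.mk s g := congrFun hk g
      have h2 : k (g' ≫ e) = Quotient.mk s g' := congrFun hk g'
      rw [hgg] at h1
      exact Quotient.exact (h1.symm.trans h2)
    -- every morphism G ⟶ P factors through j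
    have hfac : ∀ h : G ⟶ P, ∃ t : G ⟶ R, t ≫ j = h := by
      intro h
      have : (h ≫ p0) ≫ e = (h ≫ p1) ≫ e := by
        simp only [Category.assoc, hP.1]
      obtain ⟨t, ht0, ht1⟩ := key (h ≫ p0) (h ≫ p1) this
      refine ⟨t, hPmono G (t ≫ j) h ?_ ?_⟩
      · rw [Category.assoc, hj0, ht0]
      · rw [Category.assoc, hj1, ht1]
    -- j is mono
    have hjmono : Mono j := by
      constructor
      intro S f g hfg
      apply hcong.1 S f g
      · have := congrArg (fun x => x ≫ p0) hfg
        simpa only [Category.assoc, hj0] using this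
      · have := congrArg (fun x => x ≫ p1) hfg
        simpa only [Category.assoc, hj1] using this
    -- copower of G over (G ⟶ P) and the canonical extremal epi
    obtain ⟨CP, ι, hCP⟩ := hcop (G ⟶ P)
    obtain ⟨d, hd, _⟩ := hCP P (fun h => h)
    have hext : IsExtremalEpi d := hstrong P CP ι hCP d hd
    -- factor d through j
    obtain ⟨τ, hτ, _⟩ := hCP R (fun h => Classical.choose (hfac h))
    have hdfac : τ ≫ j = d := by
      obtain ⟨d', _, hu⟩ := hCP P (fun h => h)
      have h1 : τ ≫ j = d' := hu (τ ≫ j) (by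
        intro m
        rw [← Category.assoc, hτ m]
        exact Classical.choose_spec (hfac m))
      have h2 : d = d' := hu d hd
      rw [h1, h2]
    -- j is iso
    have hjiso : IsIso j := hext.2 R τ j hjmono hdfac
    -- conclude: r0, r1 is a kernel pair of e
    refine ⟨C, e, he.1, ?_⟩
    intro S s0 s1 hs
    obtain ⟨t', ⟨ht0, ht1⟩, _⟩ := hP.2 S s0 s1 hs
    refine ⟨t' ≫ inv j, ⟨?_, ?_⟩, ?_⟩
    · rw [← hj0, Category.assoc, IsIso.inv_hom_id_assoc, ht0]
    · rw [← hj1, Category.assoc, IsIso.inv_hom_id_assoc, ht1]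
    · intro y ⟨hy0, hy1⟩
      apply hcong.1 S
      · rw [hy0, ← hj0, Category.assoc, IsIso.inv_hom_id_assoc, ht0]
      · rw [hy1, ← hj1, Category.assoc, IsIso.inv_hom_id_assoc, ht1]
  · -- effective congruences ⇒ effective object
    intro hEC R A r0 r1 hcong C e he
    -- (r0, r1) is a kernel pair of e
    have hkpe : ∀ (S : K) (s0 s1 : S ⟶ A), s0 ≫ e = s1 ≫ e →
        ∃ t : S ⟶ R, t ≫ r0 = s0 ∧ t ≫ r1 = s1 := by
      obtain ⟨B, f, hf⟩ := hEC R A r0 r1 hcong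
      obtain ⟨g, hg, _⟩ := he.2 B f hf.1
      intro S s0 s1 hs
      have : s0 ≫ f = s1 ≫ f := by
        rw [← hg, ← Category.assoc, hs, Category.assoc]
      obtain ⟨t, ⟨ht0, ht1⟩, _⟩ := hf.2 S s0 s1 this
      exact ⟨t, ht0, ht1⟩
    -- e is a regular epi, so morphisms from G lift
    have hre : IsRegEpi e := ⟨R, r0, r1, he⟩
    have lift : ∀ c : G ⟶ C, ∃ g : G ⟶ A, g ≫ e = c := fun c => hproj A C e hre c
    constructor
    · funext t
      simp only [Function.comp_apply, Category.assoc, he.1]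
    · intro Z h hh
      have keyh : ∀ g g' : G ⟶ A, g ≫ e = g' ≫ e → h g = h g' := by
        intro g g' hgg
        obtain ⟨t, ht0, ht1⟩ := hkpe G g g' hgg
        calc h g = h (t ≫ r0) := by rw [ht0]
          _ = h (t ≫ r1) := congrFun hh t
          _ = h g' := by rw [ht1]
      refine ⟨fun c => h (Classical.choose (lift c)), ?_, ?_⟩
      · funext g
        exact keyh _ g (Classical.choose_spec (lift (g ≫ e)))
      · intro k' hk'
        funext c
        have hc := Classical.choose_spec (lift c)
        calc k' c = k' (Classical.choose (lift c) ≫ e) := by rw [hc]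
          _ = h (Classical.choose (lift c)) := congrFun hk' _

end Paper
end

section
/- Let K be a category with kernel pairs and coequalizers of kernel pairs and with effective congruences, and let G be a varietal generator of K. Then the hom-functor U = K(G,−) : K → Set is monadic (it has a left adjoint M ↦ M·G and the comparison functor to the Eilenberg–Moore category of the induced monad is an equivalence), and the induced monad on Set preserves filtered colimits. -/
/-!
The left adjoint of `K(G, -)` is `M ↦ M·G`, with counit the canonical morphism
`K(G, X)·G ⟶ X`. Since `G` is a regularly projective strong generator, this counit is the
coequalizer of its kernel pair, which makes the comparison functor full, and factorization
through a relation can be tested on `G`-points. An algebra `α : K(G, M·G) → M` is realized as a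
quotient of `M·G`: the pairs of points identified by `α` are the pointwise image of a pair of
morphisms into `M·G` (the kernel pair of `α·G` followed by the counit); the image relation of
that pair is a congruence, because this can be checked on points, and its effective quotient has
`M` as set of points. Finally, abstract finiteness says that every point of `M·G` factors
through `M₀·G` for a finite `M₀ ⊆ M`, and finite sets are finitely presentable, so the monad
`M ↦ K(G, M·G)` preserves filtered colimits.
-/

open CategoryTheory

universe v u

namespace Paper

variable {K : Type u} [Category.{v} K]

open Limits

noncomputable def IsCoproductOf.isColimit {M : Type v} {Y : M → K} {C : K} {ι : ∀ m, Y m ⟶ C}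
    (h : IsCoproductOf Y C ι) : IsColimit (Cofan.mk C ι) :=
  Cofan.IsColimit.mk _ (fun s => (h _ s.inj).choose) (fun s => (h _ s.inj).choose_spec.1)
    (fun s d hd => (h _ s.inj).choose_spec.2 d hd)

lemma isCoproductOf_sigma {M : Type v} (Y : M → K) [HasCoproduct Y] :
    IsCoproductOf Y (∐ Y) (Sigma.ι Y) :=
  fun _ g => ⟨Sigma.desc g, Sigma.ι_desc g, fun _ hd => Sigma.hom_ext _ _ (by simpa using hd)⟩

lemma HasCopowers.hasCoproduct {G : K} (h : HasCopowers G) (M : Type v) :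
    HasCoproduct fun _ : M => G :=
  let ⟨_, _, hC⟩ := h M
  HasColimit.mk ⟨_, hC.isColimit⟩

section Relations

variable {R A B S : K}

lemma Factors.precomp {r0 r1 : R ⟶ A} {s0 s1 : S ⟶ A} (h : Factors r0 r1 s0 s1) {T : K}
    (x : T ⟶ S) : Factors r0 r1 (x ≫ s0) (x ≫ s1) :=
  let ⟨t, h0, h1⟩ := h
  ⟨x ≫ t, by rw [Category.assoc, h0], by rw [Category.assoc, h1]⟩

lemma IsCoequalizerOf.isRegEpi {r0 r1 : R ⟶ A} {e : A ⟶ B} (h : IsCoequalizerOf r0 r1 e) :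
    IsRegEpi e :=
  ⟨R, r0, r1, h⟩

lemma IsCoequalizerOf.epi {r0 r1 : R ⟶ A} {e : A ⟶ B} (h : IsCoequalizerOf r0 r1 e) : Epi e where
  left_cancellation u v huv := by
    obtain ⟨_, -, hu⟩ := h.2 _ (e ≫ u) (by simp only [← Category.assoc, h.1])
    rw [hu u rfl, hu v huv.symm]

lemma IsCoequalizerOf.comp_isIso {r0 r1 : R ⟶ A} {e : A ⟶ B} (h : IsCoequalizerOf r0 r1 e)
    {C : K} (m : B ⟶ C) [IsIso m] : IsCoequalizerOf r0 r1 (e ≫ m) := by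
  refine ⟨by rw [← Category.assoc, h.1, Category.assoc], fun Z f hf => ?_⟩
  obtain ⟨g, hg, hu⟩ := h.2 Z f hf
  refine ⟨inv m ≫ g, by simpa using hg, fun y hy => ?_⟩
  rw [← hu (m ≫ y) (by simpa using hy), IsIso.inv_hom_id_assoc]

lemma IsKernelPairOf.collectivelyMonic {r0 r1 : R ⟶ A} {f : A ⟶ B}
    (h : IsKernelPairOf r0 r1 f) : CollectivelyMonic r0 r1 := by
  intro S a b h0 h1
  obtain ⟨t, -, hu⟩ := h.2 S (a ≫ r0) (a ≫ r1) (by simp only [Category.assoc, h.1])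
  rw [hu a ⟨rfl, rfl⟩, hu b ⟨h0.symm, h1.symm⟩]

lemma IsKernelPairOf.comp_eq_comp_iff {r0 r1 : R ⟶ A} {f : A ⟶ B} (h : IsKernelPairOf r0 r1 f)
    {s0 s1 : S ⟶ A} : s0 ≫ f = s1 ≫ f ↔ Factors r0 r1 s0 s1 :=
  ⟨fun hs => (h.2 S s0 s1 hs).exists, fun ⟨t, h0, h1⟩ => by
    rw [← h0, ← h1, Category.assoc, Category.assoc, h.1]⟩

lemma IsKernelPairOf.of_isCoequalizerOf {r0 r1 : R ⟶ A} {f : A ⟶ B} (hf : IsKernelPairOf r0 r1 f)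
    {C : K} {e : A ⟶ C} (he : IsCoequalizerOf r0 r1 e) : IsKernelPairOf r0 r1 e := by
  obtain ⟨w, hw, -⟩ := he.2 B f hf.1
  exact ⟨he.1, fun S s0 s1 hs => hf.2 S s0 s1 (by rw [← hw, ← Category.assoc, hs, Category.assoc])⟩

lemma IsCongruence.exists_isCoequalizerOf_isKernelPairOf (hck : HasCoequalizersOfKernelPairs K)
    (heff : EffectiveCongruences K) {r0 r1 : R ⟶ A} (h : IsCongruence r0 r1) :
    ∃ (X : K) (e : A ⟶ X), IsCoequalizerOf r0 r1 e ∧ IsKernelPairOf r0 r1 e := by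
  obtain ⟨B, f, hf⟩ := heff R A r0 r1 h
  obtain ⟨X, e, he⟩ := hck R A B f r0 r1 hf
  exact ⟨X, e, he, hf.of_isCoequalizerOf he⟩

end Relations

section Copower

variable (G : K) [∀ M : Type v, HasCoproduct fun _ : M => G]

noncomputable def copower : Type v ⥤ K where
  obj M := ∐ fun _ : M => G
  map f := Sigma.map' f fun _ => 𝟙 G

lemma ι_copower_map {M N : Type v} (f : M ⟶ N) (m : M) :
    Sigma.ι (fun _ : M => G) m ≫ (copower G).map f = Sigma.ι (fun _ : N => G) (f m) :=
  (Sigma.ι_comp_map' _ _ m).trans (Category.id_comp _)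

noncomputable def copowerAdj : copower G ⊣ coyoneda.obj (Opposite.op G) where
  unit.app M := ↾fun m => Sigma.ι (fun _ : M => G) m
  unit.naturality M N f := by
    ext m
    exact (ι_copower_map G f m).symm
  counit.app X := Sigma.desc fun h : G ⟶ X => h
  counit.naturality X Y f := Sigma.hom_ext _ _ fun h => by
    change Sigma.ι (fun _ : G ⟶ X => G) h ≫ Sigma.map' (· ≫ f) (fun _ => 𝟙 G) ≫
      Sigma.desc (fun h => h) = Sigma.ι (fun _ : G ⟶ X => G) h ≫ Sigma.desc (fun h => h) ≫ f
    simp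
  left_triangle_components M := Sigma.hom_ext _ _ fun m => by
    change Sigma.ι (fun _ : M => G) m ≫ Sigma.map' (Sigma.ι (fun _ : M => G)) (fun _ => 𝟙 G) ≫
      Sigma.desc (fun h => h) = Sigma.ι (fun _ : M => G) m ≫ 𝟙 _
    simp
  right_triangle_components X := by
    ext h
    exact Sigma.ι_desc _ h

end Copower

lemma StrongGenerator.generatorP {G : K} (hG : StrongGenerator G) : GeneratorP G :=
  fun X C ι hC d hd => (hG X C ι hC d hd).1

section Generator

variable {G : K} [∀ M : Type v, HasCoproduct fun _ : M => G]

lemma StrongGenerator.isExtremalEpi_desc (hG : StrongGenerator G) (X : K) :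
    IsExtremalEpi (Sigma.desc fun h : G ⟶ X => h) :=
  hG X _ _ (isCoproductOf_sigma _) _ (Sigma.ι_desc _)

lemma GeneratorP.hom_ext (hG : GeneratorP G) {X Y : K} {u v : X ⟶ Y}
    (h : ∀ x : G ⟶ X, x ≫ u = x ≫ v) : u = v := by
  have := hG X _ _ (isCoproductOf_sigma _) (Sigma.desc fun x => x) (Sigma.ι_desc _)
  exact (cancel_epi (Sigma.desc fun x : G ⟶ X => x)).1
    (Sigma.hom_ext _ _ fun x => by simpa using h x)

lemma GeneratorP.faithful_coyoneda (hG : GeneratorP G) :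
    (coyoneda.obj (Opposite.op G)).Faithful where
  map_injective h := hG.hom_ext fun x => ConcreteCategory.congr_hom h x

lemma mono_of_isCoequalizerOf_kernelPair (hG : GeneratorP G) (hRP : RegularProjective G)
    {P V I W : K} {k0 k1 : P ⟶ V} {θ : V ⟶ W} {c : V ⟶ I} {m : I ⟶ W}
    (hk : IsKernelPairOf k0 k1 θ) (hc : IsCoequalizerOf k0 k1 c) (hm : c ≫ m = θ) : Mono m where
  right_cancellation u v huv := hG.hom_ext fun x => by
    obtain ⟨y, hy⟩ := hRP _ _ c hc.isRegEpi (x ≫ u)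
    obtain ⟨z, hz⟩ := hRP _ _ c hc.isRegEpi (x ≫ v)
    obtain ⟨w, hw0, hw1⟩ := hk.comp_eq_comp_iff.1 (show y ≫ θ = z ≫ θ by
      rw [← hm, ← Category.assoc, hy, ← Category.assoc, hz, Category.assoc, Category.assoc, huv])
    rw [← hy, ← hz, ← hw0, ← hw1, Category.assoc, Category.assoc, hc.1]

lemma exists_isRegEpi_mono_factorization (hkp : HasKernelPairs K)
    (hck : HasCoequalizersOfKernelPairs K) (hG : GeneratorP G) (hRP : RegularProjective G)
    {V W : K} (θ : V ⟶ W) :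
    ∃ (I : K) (c : V ⟶ I) (m : I ⟶ W), c ≫ m = θ ∧ IsRegEpi c ∧ Mono m := by
  obtain ⟨P, k0, k1, hk⟩ := hkp V W θ
  obtain ⟨I, c, hc⟩ := hck P V W θ k0 k1 hk
  obtain ⟨m, hm, -⟩ := hc.2 W θ hk.1
  exact ⟨I, c, m, hm, hc.isRegEpi, mono_of_isCoequalizerOf_kernelPair hG hRP hk hc hm⟩

lemma IsExtremalEpi.isCoequalizerOf_kernelPair (hck : HasCoequalizersOfKernelPairs K)
    (hG : GeneratorP G) (hRP : RegularProjective G) {P A B : K} {e : A ⟶ B}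
    (he : IsExtremalEpi e) {k0 k1 : P ⟶ A} (hk : IsKernelPairOf k0 k1 e) :
    IsCoequalizerOf k0 k1 e := by
  obtain ⟨C, c, hc⟩ := hck P A B e k0 k1 hk
  obtain ⟨m, hm, -⟩ := hc.2 B e hk.1
  have := he.2 C c m (mono_of_isCoequalizerOf_kernelPair hG hRP hk hc hm) hm
  rw [← hm]
  exact hc.comp_isIso m

lemma factors_of_forall_factors (hkp : HasKernelPairs K) (hck : HasCoequalizersOfKernelPairs K)
    (hG : StrongGenerator G) (hRP : RegularProjective G) {R B S : K} {r0 r1 : R ⟶ B}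
    (hr : CollectivelyMonic r0 r1) {s0 s1 : S ⟶ B}
    (h : ∀ x : G ⟶ S, Factors r0 r1 (x ≫ s0) (x ≫ s1)) : Factors r0 r1 s0 s1 := by
  choose w hw0 hw1 using h
  let ε := Sigma.desc fun x : G ⟶ S => x
  have hε0 : Sigma.desc w ≫ r0 = ε ≫ s0 := Sigma.hom_ext _ _ fun x => by simp [ε, hw0]
  have hε1 : Sigma.desc w ≫ r1 = ε ≫ s1 := Sigma.hom_ext _ _ fun x => by simp [ε, hw1]
  obtain ⟨P, k0, k1, hk⟩ := hkp _ _ ε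
  have hεk := (hG.isExtremalEpi_desc S).isCoequalizerOf_kernelPair hck hG.generatorP hRP hk
  obtain ⟨t, ht, -⟩ := hεk.2 R (Sigma.desc w) (hr P _ _
    (by rw [Category.assoc, Category.assoc, hε0, ← Category.assoc, hk.1, Category.assoc])
    (by rw [Category.assoc, Category.assoc, hε1, ← Category.assoc, hk.1, Category.assoc]))
  have := hεk.epi
  exact ⟨t, (cancel_epi ε).1 (by rw [← Category.assoc, ht, hε0]),
    (cancel_epi ε).1 (by rw [← Category.assoc, ht, hε1])⟩

lemma isCongruence_of_equivalence (hkp : HasKernelPairs K) (hck : HasCoequalizersOfKernelPairs K)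
    (hG : StrongGenerator G) (hRP : RegularProjective G) {R A : K} {r0 r1 : R ⟶ A}
    (hr : CollectivelyMonic r0 r1) (h : Equivalence fun x y : G ⟶ A => Factors r0 r1 x y) :
    IsCongruence r0 r1 :=
  ⟨hr, fun _ _ => factors_of_forall_factors hkp hck hG hRP hr fun _ => h.refl _,
    fun _ _ _ hs => factors_of_forall_factors hkp hck hG hRP hr fun x => h.symm (hs.precomp x),
    fun _ _ _ _ hs hs' => factors_of_forall_factors hkp hck hG hRP hr fun x =>
      h.trans (hs.precomp x) (hs'.precomp x)⟩

lemma exists_pointwise_equalizer (hkp : HasKernelPairs K)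
    (hck : HasCoequalizersOfKernelPairs K) (hG : GeneratorP G) (hRP : RegularProjective G)
    {A B : K} (u v : A ⟶ B) :
    ∃ (E : K) (j : E ⟶ A), Mono j ∧ j ≫ u = j ≫ v ∧
      ∀ κ : G ⟶ A, κ ≫ u = κ ≫ v → ∃ z : G ⟶ E, z ≫ j = κ := by
  let Q := {κ : G ⟶ A // κ ≫ u = κ ≫ v}
  let θ := Sigma.desc fun κ : Q => κ.1
  have hθ : θ ≫ u = θ ≫ v := Sigma.hom_ext _ _ fun κ => by simpa [θ] using κ.2
  obtain ⟨E, c, j, hcj, hc, hj⟩ := exists_isRegEpi_mono_factorization hkp hck hG hRP θ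
  refine ⟨E, j, hj, hG.hom_ext fun z => ?_, fun κ hκ => ⟨Sigma.ι (fun _ : Q => G) ⟨κ, hκ⟩ ≫ c, ?_⟩⟩
  · obtain ⟨y, rfl⟩ := hRP _ _ c hc z
    simp only [Category.assoc, reassoc_of% hcj, hθ]
  · simp [hcj, θ]

/-- The intersection of the kernel pairs of `ρ0` and `ρ1`, seen on `G`-points. -/
lemma exists_collectivelyMonic_factors_iff_comp_eq (hkp : HasKernelPairs K)
    (hck : HasCoequalizersOfKernelPairs K) (hG : GeneratorP G) (hRP : RegularProjective G)
    {N B : K} (ρ0 ρ1 : N ⟶ B) :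
    ∃ (E : K) (j0 j1 : E ⟶ N), CollectivelyMonic j0 j1 ∧ ∀ p p' : G ⟶ N,
      Factors j0 j1 p p' ↔ p ≫ ρ0 = p' ≫ ρ0 ∧ p ≫ ρ1 = p' ≫ ρ1 := by
  obtain ⟨P, a0, a1, ha⟩ := hkp N B ρ0
  obtain ⟨E, j, hj, hjρ, hjpt⟩ :=
    exists_pointwise_equalizer hkp hck hG hRP (a0 ≫ ρ1) (a1 ≫ ρ1)
  refine ⟨E, j ≫ a0, j ≫ a1, fun S f g h0 h1 => ?_, fun p p' => ⟨?_, ?_⟩⟩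
  · simp only [← Category.assoc] at h0 h1
    exact (cancel_mono j).1 (ha.collectivelyMonic S _ _ h0 h1)
  · rintro ⟨z, rfl, rfl⟩
    simp only [Category.assoc, ha.1, hjρ, and_self]
  · rintro ⟨h0, h1⟩
    obtain ⟨κ, rfl, rfl⟩ := ha.comp_eq_comp_iff.1 h0
    obtain ⟨z, rfl⟩ := hjpt κ (by simpa using h1)
    exact ⟨z, (Category.assoc _ _ _).symm, (Category.assoc _ _ _).symm⟩

/-- The image of an arbitrary pair `ρ0, ρ1 : N ⟶ B` as a relation on `B`. -/
lemma exists_collectivelyMonic_factors_iff (hkp : HasKernelPairs K)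
    (hck : HasCoequalizersOfKernelPairs K) (heff : EffectiveCongruences K)
    (hG : StrongGenerator G) (hRP : RegularProjective G) {N B : K} (ρ0 ρ1 : N ⟶ B) :
    ∃ (R : K) (r0 r1 : R ⟶ B), CollectivelyMonic r0 r1 ∧
      ∀ x y : G ⟶ B, Factors r0 r1 x y ↔ Factors ρ0 ρ1 x y := by
  obtain ⟨E, j0, j1, hj, hjpt⟩ :=
    exists_collectivelyMonic_factors_iff_comp_eq hkp hck hG.generatorP hRP ρ0 ρ1
  have hjρ : j0 ≫ ρ0 = j1 ≫ ρ0 ∧ j0 ≫ ρ1 = j1 ≫ ρ1 := by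
    have hz z := (hjpt (z ≫ j0) (z ≫ j1)).1 ⟨z, rfl, rfl⟩
    simp only [Category.assoc] at hz
    exact ⟨hG.generatorP.hom_ext fun z => (hz z).1, hG.generatorP.hom_ext fun z => (hz z).2⟩
  have hequiv : Equivalence fun p p' : G ⟶ N => Factors j0 j1 p p' := by
    simp only [hjpt]
    exact ⟨fun _ => ⟨rfl, rfl⟩, fun h => ⟨h.1.symm, h.2.symm⟩,
      fun h h' => ⟨h.1.trans h'.1, h.2.trans h'.2⟩⟩
  obtain ⟨R, c, hc, hck'⟩ := (isCongruence_of_equivalence hkp hck hG hRP hj hequiv)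
    |>.exists_isCoequalizerOf_isKernelPairOf hck heff
  obtain ⟨r0, hr0, -⟩ := hc.2 B ρ0 hjρ.1
  obtain ⟨r1, hr1, -⟩ := hc.2 B ρ1 hjρ.2
  refine ⟨R, r0, r1, fun S u v h0 h1 => hG.generatorP.hom_ext fun x => ?_, fun x y => ⟨?_, ?_⟩⟩
  · obtain ⟨p, hp⟩ := hRP _ _ c hc.isRegEpi (x ≫ u)
    obtain ⟨p', hp'⟩ := hRP _ _ c hc.isRegEpi (x ≫ v)
    rw [← hp, ← hp', hck'.comp_eq_comp_iff, hjpt, ← hr0, ← hr1]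
    simp only [← Category.assoc, hp, hp']
    simp only [Category.assoc, h0, h1, and_self]
  · rintro ⟨w, rfl, rfl⟩
    obtain ⟨p, rfl⟩ := hRP _ _ c hc.isRegEpi w
    exact ⟨p, by rw [Category.assoc, hr0], by rw [Category.assoc, hr1]⟩
  · rintro ⟨p, rfl, rfl⟩
    exact ⟨p ≫ c, by rw [Category.assoc, hr0], by rw [Category.assoc, hr1]⟩

lemma exists_quotient_of_equivalence (hkp : HasKernelPairs K)
    (hck : HasCoequalizersOfKernelPairs K) (heff : EffectiveCongruences K)
    (hG : StrongGenerator G) (hRP : RegularProjective G) {N B : K} (ρ0 ρ1 : N ⟶ B)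
    (h : Equivalence fun x y : G ⟶ B => Factors ρ0 ρ1 x y) :
    ∃ (X : K) (e : B ⟶ X), (∀ y : G ⟶ X, ∃ x : G ⟶ B, x ≫ e = y) ∧
      ∀ x y : G ⟶ B, x ≫ e = y ≫ e ↔ Factors ρ0 ρ1 x y := by
  obtain ⟨R, r0, r1, hr, hrpt⟩ := exists_collectivelyMonic_factors_iff hkp hck heff hG hRP ρ0 ρ1
  obtain ⟨X, e, he, hek⟩ := (isCongruence_of_equivalence hkp hck hG hRP hr
    (by simpa only [hrpt] using h)).exists_isCoequalizerOf_isKernelPairOf hck heff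
  exact ⟨X, e, hRP _ _ e he.isRegEpi, fun x y => hek.comp_eq_comp_iff.trans (hrpt x y)⟩

lemma comparison_full (hkp : HasKernelPairs K) (hck : HasCoequalizersOfKernelPairs K)
    (hG : StrongGenerator G) (hRP : RegularProjective G) :
    (Monad.comparison (copowerAdj G)).Full where
  map_surjective {X Y} ψ := by
    let ε := Sigma.desc fun x : G ⟶ X => x
    let û : (∐ fun _ : G ⟶ X => G) ⟶ Y := (copower G).map ψ.f ≫ Sigma.desc fun y : G ⟶ Y => y
    have hû (p : G ⟶ ∐ fun _ : G ⟶ X => G) : p ≫ û = ψ.f (p ≫ ε) := by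
      have := ConcreteCategory.congr_hom ψ.h p
      change (p ≫ Sigma.map' ψ.f fun _ => 𝟙 G) ≫ Sigma.desc (fun y => y) = ψ.f (p ≫ ε) at this
      rw [← this, Category.assoc]
      rfl
    obtain ⟨P, k0, k1, hk⟩ := hkp _ _ ε
    have hε := (hG.isExtremalEpi_desc X).isCoequalizerOf_kernelPair hck hG.generatorP hRP hk
    obtain ⟨u, hu, -⟩ := hε.2 Y û (hG.generatorP.hom_ext fun z => by
      rw [← Category.assoc, ← Category.assoc, hû, hû, Category.assoc, Category.assoc, hk.1])
    refine ⟨u, Monad.Algebra.Hom.ext ?_⟩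
    ext (x : G ⟶ X)
    change x ≫ u = ψ.f x
    have hx := hû (Sigma.ι (fun _ : G ⟶ X => G) x)
    rw [← hu, Sigma.ι_desc_assoc] at hx
    rw [hx, Sigma.ι_desc]

lemma exists_quotient_of_algebra (hkp : HasKernelPairs K) (hck : HasCoequalizersOfKernelPairs K)
    (heff : EffectiveCongruences K) (hG : StrongGenerator G) (hRP : RegularProjective G)
    {M : Type v} (α : (G ⟶ ∐ fun _ : M => G) ⟶ M)
    (hassoc : ∀ p : G ⟶ ∐ fun _ : (G ⟶ ∐ fun _ : M => G) => G,
      α (p ≫ Sigma.desc fun x => x) = α (p ≫ Sigma.map' α fun _ => 𝟙 G)) :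
    ∃ (X : K) (e : (∐ fun _ : M => G) ⟶ X), (∀ y : G ⟶ X, ∃ x, x ≫ e = y) ∧
      ∀ x y, x ≫ e = y ≫ e ↔ α x = α y := by
  let f : (∐ fun _ : (G ⟶ ∐ fun _ : M => G) => G) ⟶ ∐ fun _ : M => G := Sigma.desc fun x => x
  let g : (∐ fun _ : (G ⟶ ∐ fun _ : M => G) => G) ⟶ ∐ fun _ : M => G := Sigma.map' α fun _ => 𝟙 G
  obtain ⟨N, m0, m1, hm⟩ := hkp _ _ g
  -- `α` coequalizes the pair `f, g`, which is split by the injections `Sigma.ι`; so the pairs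
  -- of points identified by `α` are exactly the images under `f` of the kernel pair of `g`.
  have hker (x y : G ⟶ ∐ fun _ : M => G) : Factors (m0 ≫ f) (m1 ≫ f) x y ↔ α x = α y := by
    constructor
    · rintro ⟨p, rfl, rfl⟩
      simp only [← Category.assoc] at hassoc ⊢
      rw [hassoc, hassoc, Category.assoc, Category.assoc, hm.1]
    · intro h
      obtain ⟨p, hp0, hp1⟩ := hm.comp_eq_comp_iff.1 (show
        Sigma.ι (fun _ : (G ⟶ ∐ fun _ : M => G) => G) x ≫ g =
          Sigma.ι (fun _ : (G ⟶ ∐ fun _ : M => G) => G) y ≫ g by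
        simp [g, h])
      exact ⟨p, by simp [f, reassoc_of% hp0], by simp [f, reassoc_of% hp1]⟩
  obtain ⟨X, e, he_surj, he⟩ := exists_quotient_of_equivalence hkp hck heff hG hRP
    (m0 ≫ f) (m1 ≫ f) (by simp only [hker]; exact ⟨fun _ => rfl, Eq.symm, Eq.trans⟩)
  exact ⟨X, e, he_surj, fun x y => (he x y).trans (hker x y)⟩

lemma comparison_essSurj (hkp : HasKernelPairs K) (hck : HasCoequalizersOfKernelPairs K)
    (heff : EffectiveCongruences K) (hG : StrongGenerator G) (hRP : RegularProjective G) :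
    (Monad.comparison (copowerAdj G)).EssSurj where
  mem_essImage A := by
    let α : (G ⟶ ∐ fun _ : A.A => G) ⟶ A.A := A.a
    obtain ⟨X, e, he_surj, he⟩ := exists_quotient_of_algebra hkp hck heff hG hRP α
      (ConcreteCategory.congr_hom A.assoc)
    have hunit (m : A.A) : α (Sigma.ι (fun _ : A.A => G) m) = m :=
      ConcreteCategory.congr_hom A.unit m
    let β : A.A → (G ⟶ X) := fun m => Sigma.ι (fun _ : A.A => G) m ≫ e
    have hβ : Function.Bijective β := by
      refine ⟨fun m m' h => by rw [← hunit m, ← hunit m', ← he]; exact h, fun y => ?_⟩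
      obtain ⟨x, rfl⟩ := he_surj y
      exact ⟨α x, (he _ _).2 (hunit _)⟩
    have hβe : (Sigma.map' β fun _ => 𝟙 G) ≫ (Sigma.desc fun y => y) = e :=
      Sigma.hom_ext _ _ fun m => by simp [β]
    refine ⟨X, ⟨(Monad.Algebra.isoMk (Equiv.ofBijective β hβ).toIso ?_).symm⟩⟩
    ext (p : G ⟶ ∐ fun _ : A.A => G)
    change (p ≫ Sigma.map' β fun _ => 𝟙 G) ≫ Sigma.desc (fun y => y) = Sigma.ι _ (α p) ≫ e
    rw [Category.assoc, hβe, he, hunit]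

lemma comparison_isEquivalence (hkp : HasKernelPairs K) (hck : HasCoequalizersOfKernelPairs K)
    (heff : EffectiveCongruences K) (hG : StrongGenerator G) (hRP : RegularProjective G) :
    (Monad.comparison (copowerAdj G)).IsEquivalence :=
  have := hG.generatorP.faithful_coyoneda
  { full := comparison_full hkp hck hG hRP
    essSurj := comparison_essSurj hkp hck heff hG hRP }

lemma isFinitelyPresentable_of_finite (S : Type v) [Finite S] : IsFinitelyPresentable.{v} S :=
  have := Cardinal.fact_isRegular_aleph0
  HasCardinalLT.isCardinalPresentable ((hasCardinalLT_aleph0_iff S).2 ‹_›)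

lemma exists_map_eq_of_isColimit {J : Type v} [SmallCategory J] [IsFiltered J]
    {D : J ⥤ Type v} {c : Cocone D} (hc : IsColimit c) {j : J} {S : Type v} [Finite S]
    (s : S → D.obj j) :
    ∃ (k : J) (h : j ⟶ k), ∀ a b, c.ι.app j (s a) = c.ι.app j (s b) →
      D.map h (s a) = D.map h (s b) := by
  let P := {p : S × S // c.ι.app j (s p.1) = c.ι.app j (s p.2)}
  have := isFinitelyPresentable_of_finite P
  obtain ⟨k, h, hk⟩ := (Types.FilteredColimit.isColimit_eq_iff'
    (isColimitOfPreserves (coyoneda.obj (Opposite.op P)) hc)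
    (↾fun p : P => s p.1.1) (↾fun p : P => s p.1.2)).1 (by
      change (↾fun p : P => s p.1.1) ≫ c.ι.app j = (↾fun p : P => s p.1.2) ≫ c.ι.app j
      ext p
      exact p.2)
  exact ⟨k, h, fun a b hab => ConcreteCategory.congr_hom hk ⟨(a, b), hab⟩⟩

lemma comp_copower_map_injective {M N : Type v} {f : M ⟶ N} (hf : Function.Injective f) :
    Function.Injective fun x : G ⟶ (copower G).obj M => x ≫ (copower G).map f := by
  intro x y hxy
  obtain ⟨r, hr⟩ : ∃ r, (copower G).map f ≫ r = 𝟙 _ := by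
    rcases isEmpty_or_nonempty M with hM | hM
    · exact ⟨Sigma.desc fun _ => x, Sigma.hom_ext _ _ fun m => isEmptyElim m⟩
    · refine ⟨(copower G).map (↾(Function.invFun f)), ?_⟩
      rw [← Functor.map_comp, ← (copower G).map_id M]
      congr 1
      ext m
      exact Function.leftInverse_invFun hf m
  simpa only [Category.assoc, hr, Category.comp_id] using congrArg (· ≫ r) hxy

lemma comp_copower_map_eq_of_ker_le {S A B : Type v} {f₁ : S ⟶ A} {f₂ : S ⟶ B}
    (h : ∀ a b, f₂ a = f₂ b → f₁ a = f₁ b) {x y : G ⟶ (copower G).obj S}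
    (hxy : x ≫ (copower G).map f₂ = y ≫ (copower G).map f₂) :
    x ≫ (copower G).map f₁ = y ≫ (copower G).map f₁ := by
  let π : S ⟶ Set.range f₂ := ↾fun s => ⟨f₂ s, s, rfl⟩
  let g : (Set.range f₂ : Type v) ⟶ A := ↾fun b => f₁ b.2.choose
  have hπ : x ≫ (copower G).map π = y ≫ (copower G).map π :=
    comp_copower_map_injective (f := ↾Subtype.val) Subtype.val_injective
      (by simp only [Category.assoc, ← Functor.map_comp]; exact hxy)
  have hf₁ : f₁ = π ≫ g := by
    ext s
    exact (h _ _ (Set.mem_range_self (f := f₂) s).choose_spec).symm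
  rw [hf₁, Functor.map_comp, ← Category.assoc, hπ, Category.assoc]

lemma AbstractlyFinite.exists_finite_factorization (hG : AbstractlyFinite G) {M : Type v}
    (x : G ⟶ (copower G).obj M) :
    ∃ S : Set M, S.Finite ∧ ∀ S' : Set M, S ⊆ S' →
      ∃ x₀ : G ⟶ (copower G).obj S', x₀ ≫ (copower G).map (↾Subtype.val) = x := by
  obtain ⟨S, hS, h⟩ := hG M _ _ (isCoproductOf_sigma _) x
  obtain ⟨x₀, hx₀⟩ := h _ _ ((copower G).map (↾Subtype.val)) (isCoproductOf_sigma _)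
    fun m => ι_copower_map G _ m
  refine ⟨S, hS, fun S' hS' => ⟨x₀ ≫ (copower G).map (↾(Set.inclusion hS')), ?_⟩⟩
  rw [Category.assoc, ← Functor.map_comp]
  exact hx₀

lemma AbstractlyFinite.exists_comp_copower_map_ι_eq (hG : AbstractlyFinite G)
    {J : Type v} [SmallCategory J] [IsFiltered J] {D : J ⥤ Type v} {c : Cocone D}
    (hc : IsColimit c) (x : G ⟶ (copower G).obj c.pt) :
    ∃ (j : J) (x' : G ⟶ (copower G).obj (D.obj j)), x' ≫ (copower G).map (c.ι.app j) = x := by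
  obtain ⟨S, hS, hx⟩ := hG.exists_finite_factorization x
  obtain ⟨x₀, rfl⟩ := hx S le_rfl
  have := hS.to_subtype
  have := isFinitelyPresentable_of_finite S
  obtain ⟨j, p, hp⟩ :=
    IsFinitelyPresentable.exists_hom_of_isColimit hc (↾(Subtype.val : S → c.pt))
  refine ⟨j, x₀ ≫ (copower G).map p, ?_⟩
  rw [Category.assoc, ← Functor.map_comp, hp]

lemma AbstractlyFinite.exists_comp_copower_map_eq (hG : AbstractlyFinite G)
    {J : Type v} [SmallCategory J] [IsFiltered J] {D : J ⥤ Type v} {c : Cocone D}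
    (hc : IsColimit c) {j : J} {x y : G ⟶ (copower G).obj (D.obj j)}
    (hxy : x ≫ (copower G).map (c.ι.app j) = y ≫ (copower G).map (c.ι.app j)) :
    ∃ (k : J) (h : j ⟶ k), x ≫ (copower G).map (D.map h) = y ≫ (copower G).map (D.map h) := by
  obtain ⟨S₁, hS₁, hx⟩ := hG.exists_finite_factorization x
  obtain ⟨S₂, hS₂, hy⟩ := hG.exists_finite_factorization y
  obtain ⟨x₀, rfl⟩ := hx (S₁ ∪ S₂) Set.subset_union_left
  obtain ⟨y₀, rfl⟩ := hy (S₁ ∪ S₂) Set.subset_union_right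
  have := (hS₁.union hS₂).to_subtype
  obtain ⟨k, h, hk⟩ := exists_map_eq_of_isColimit hc (Subtype.val : ↥(S₁ ∪ S₂) → D.obj j)
  refine ⟨k, h, ?_⟩
  simp only [Category.assoc, ← Functor.map_comp] at hxy ⊢
  exact comp_copower_map_eq_of_ker_le (fun a b => hk a b) hxy

lemma AbstractlyFinite.preservesColimitsOfShape (hG : AbstractlyFinite G) (J : Type v)
    [SmallCategory J] [IsFiltered J] :
    PreservesColimitsOfShape J (copowerAdj G).toMonad.toFunctor where
  preservesColimit := ⟨fun hc => ⟨Types.FilteredColimit.isColimitOf' _ _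
    (fun x => (hG.exists_comp_copower_map_ι_eq hc x).imp fun _ ⟨x', hx'⟩ => ⟨x', hx'.symm⟩)
    (fun _ _ _ hxy => hG.exists_comp_copower_map_eq hc hxy)⟩⟩

end Generator

/-- for a varietal generator `G` in a category with kernel pairs,
coequalizers of kernel pairs and effective congruences, the hom-functor
`K(G,−) : K ⥤ Set` is monadic and the induced monad preserves filtered colimits. -/
theorem stmt7 {K : Type u} [Category.{v} K]
    (hkp : HasKernelPairs K) (hck : HasCoequalizersOfKernelPairs K)
    (heff : EffectiveCongruences K) (G : K) (hG : VarietalGenerator G) :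
    ∃ (F : Type v ⥤ K) (adj : F ⊣ coyoneda.obj (Opposite.op G)),
      (Monad.comparison adj).IsEquivalence ∧
        ∀ (J : Type v) [SmallCategory J] [IsFiltered J],
          Limits.PreservesColimitsOfShape J adj.toMonad.toFunctor := by
  obtain ⟨hCop, hSG, hAF, hRP⟩ := hG
  have := hCop.hasCoproduct
  exact ⟨copower G, copowerAdj G, comparison_isEquivalence hkp hck heff hSG hRP,
    hAF.preservesColimitsOfShape⟩

end Paper
end

section
/- The category Pos of partially ordered sets and monotone maps has effective subcongruences: for every subcongruence r0, r1 : R → A in Pos there exist a partial order C and a surjective monotone map c : A → C such that r0, r1 is the subkernel pair of c, i.e., c∘r0 ≤ c∘r1 pointwise, and for all monotone maps v0, v1 : V → A with c∘v0 ≤ c∘v1 pointwise there is a monotone map t : V → R with r0∘t = v0 and r1∘t = v1. -/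
universe u

namespace Paper

/-- The pair `s0, s1` factorizes through the pair of monotone maps `r0, r1`. -/
def FactorsPos {R A S : Type u} [PartialOrder R] [PartialOrder A] [PartialOrder S]
    (r0 r1 : R →o A) (s0 s1 : S →o A) : Prop :=
  ∃ t : S →o R, r0.comp t = s0 ∧ r1.comp t = s1

/-- `r0, r1` is collectively order-reflecting. -/
def CollOrderReflectingPos {R A : Type u} [PartialOrder R] [PartialOrder A]
    (r0 r1 : R →o A) : Prop :=
  ∀ (X : Type u) [PartialOrder X] (f f' : X →o R),
    r0.comp f ≤ r0.comp f' → r1.comp f ≤ r1.comp f' → f ≤ f'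

/-- A subcongruence in `Pos`: an order-reflexive and transitive relation. -/
def IsSubcongruencePos {R A : Type u} [PartialOrder R] [PartialOrder A]
    (r0 r1 : R →o A) : Prop :=
  CollOrderReflectingPos r0 r1 ∧
  (∀ (S : Type u) [PartialOrder S] (s0 s1 : S →o A), s0 ≤ s1 → FactorsPos r0 r1 s0 s1) ∧
  (∀ (S : Type u) [PartialOrder S] (s s' s'' : S →o A),
    FactorsPos r0 r1 s s' → FactorsPos r0 r1 s' s'' → FactorsPos r0 r1 s s'')

/-- `r0, r1` is the subkernel pair of the monotone map `c : A → C`. -/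
def IsSubkernelPairOfPos {R A : Type u} [PartialOrder R] [PartialOrder A]
    (r0 r1 : R →o A) (C : Type u) (instC : PartialOrder C) (c : A → C) : Prop :=
  letI := instC
  Monotone c ∧ (∀ z, c (r0 z) ≤ c (r1 z)) ∧
    ∀ (V : Type u) [PartialOrder V] (v0 v1 : V →o A),
      (∀ x, c (v0 x) ≤ c (v1 x)) → FactorsPos r0 r1 v0 v1

/-!
The relation `a ~ b :↔ ∃ z, r0 z = a ∧ r1 z = b` is what a pair factorizing through `r0, r1`
traces out pointwise. Testing order-reflexivity and transitivity on constant maps out of a point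
shows that `~` is a preorder containing `≤`, and `C` is its antisymmetrization. Conversely, if
`v0 x ~ v1 x` for every `x`, choosing witnesses pointwise gives a map `V → R`, and it is monotone
because `r0, r1` is collectively order-reflecting (tested, again, on maps out of a point).
-/

section

variable {R A : Type u} [PartialOrder R] [PartialOrder A] {r0 r1 : R →o A}

variable (r0 r1) in
def Related (a b : A) : Prop :=
  ∃ z, r0 z = a ∧ r1 z = b

theorem factorsPos_const_iff_related {a b : A} :
    FactorsPos r0 r1 (OrderHom.const PUnit.{u+1} a) (OrderHom.const PUnit.{u+1} b) ↔
      Related r0 r1 a b := by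
  constructor
  · rintro ⟨t, h0, h1⟩
    exact ⟨t .unit, congr($h0 .unit), congr($h1 .unit)⟩
  · rintro ⟨z, rfl, rfl⟩
    exact ⟨OrderHom.const _ z, rfl, rfl⟩

theorem IsSubcongruencePos.related_of_le (h : IsSubcongruencePos r0 r1) {a b : A} (hab : a ≤ b) :
    Related r0 r1 a b :=
  factorsPos_const_iff_related.1 <| h.2.1 _ _ _ fun _ => hab

theorem IsSubcongruencePos.related_trans (h : IsSubcongruencePos r0 r1) {a b c : A}
    (hab : Related r0 r1 a b) (hbc : Related r0 r1 b c) : Related r0 r1 a c :=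
  factorsPos_const_iff_related.1 <|
    h.2.2 _ _ _ _ (factorsPos_const_iff_related.2 hab) (factorsPos_const_iff_related.2 hbc)

theorem CollOrderReflectingPos.le_of_map_le (h : CollOrderReflectingPos r0 r1) {z z' : R}
    (h0 : r0 z ≤ r0 z') (h1 : r1 z ≤ r1 z') : z ≤ z' :=
  h PUnit (OrderHom.const _ z) (OrderHom.const _ z') (fun _ => h0) (fun _ => h1) .unit

theorem CollOrderReflectingPos.factorsPos_of_forall_related (h : CollOrderReflectingPos r0 r1)
    {V : Type u} [PartialOrder V] (v0 v1 : V →o A) (hv : ∀ x, Related r0 r1 (v0 x) (v1 x)) :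
    FactorsPos r0 r1 v0 v1 := by
  choose t ht0 ht1 using hv
  refine ⟨⟨t, fun x x' hxx' => h.le_of_map_le ?_ ?_⟩, OrderHom.ext _ _ (funext ht0),
    OrderHom.ext _ _ (funext ht1)⟩
  · simpa only [ht0] using v0.monotone hxx'
  · simpa only [ht1] using v1.monotone hxx'

def IsSubcongruencePos.RelatedOrder (_ : IsSubcongruencePos r0 r1) : Type u := A

instance (h : IsSubcongruencePos r0 r1) : Preorder h.RelatedOrder where
  le := (Related r0 r1 : A → A → Prop)
  le_refl _ := h.related_of_le le_rfl
  le_trans _ _ _ := h.related_trans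

end

/-- `Pos` has effective subcongruences: every subcongruence is the
subkernel pair of a surjective monotone map. -/
theorem stmt12 {R A : Type u} [PartialOrder R] [PartialOrder A]
    (r0 r1 : R →o A) (h : IsSubcongruencePos r0 r1) :
    ∃ (C : Type u) (instC : PartialOrder C) (c : A → C),
      Function.Surjective c ∧ IsSubkernelPairOfPos r0 r1 C instC c := by
  refine ⟨Antisymmetrization h.RelatedOrder (· ≤ ·), inferInstance,
    toAntisymmetrization (α := h.RelatedOrder) (· ≤ ·), Quotient.mk_surjective, ?_, ?_, ?_⟩
  · exact fun _ _ hab => h.related_of_le hab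
  · exact fun z => ⟨z, rfl, rfl⟩
  · exact fun _ _ v0 v1 hv => h.1.factorsPos_of_forall_related v0 v1 hv

end Paper
end

section
/- Let r0, r1 : R → A be a subcongruence in Pos, and define a binary relation ⊑ on A by: x ⊑ y iff x = r0(z) and y = r1(z) for some z ∈ R. Then ⊑ is a preorder (reflexive and transitive) containing the partial order of A (x ≤ y implies x ⊑ y), and the quotient map c : A → C of A onto the posetal reflection of (A, ⊑) is a coinserter of r0 and r1 in Pos: c∘r0 ≤ c∘r1 pointwise, every monotone map c' : A → C' with c'∘r0 ≤ c'∘r1 factorizes through c, and for monotone u0, u1 with domain C, u0∘c ≤ u1∘c implies u0 ≤ u1. -/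
universe u

namespace Paper

/-- `c : A → C` is (up to isomorphism) the quotient map of `A` onto the posetal
reflection of the preordered set `(A, sq)`: it is surjective and `c x ≤ c y ↔ sq x y`. -/
def IsPosetalReflectionMap {A : Type u} (sq : A → A → Prop)
    (C : Type u) (instC : PartialOrder C) (c : A → C) : Prop :=
  letI := instC
  Function.Surjective c ∧ ∀ x y, c x ≤ c y ↔ sq x y

/-!
Testing order-reflexivity and transitivity of `r0, r1` on the one-point poset says exactly that
`⊑` contains `≤` and is transitive. A monotone `c'` with `c' ∘ r0 ≤ c' ∘ r1` is monotone for `⊑`,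
since every instance of `⊑` has the form `r0 z ⊑ r1 z`; as `c x ≤ c y ↔ x ⊑ y` and `c` is
surjective, `c'` descends along `c`, and inequalities `u0 ∘ c ≤ u1 ∘ c` descend as well.
-/

def IsOrderReflexivePos {R A : Type u} [PartialOrder R] [PartialOrder A]
    (r0 r1 : R →o A) : Prop :=
  ∀ (S : Type u) [PartialOrder S] (s0 s1 : S →o A), s0 ≤ s1 → FactorsPos r0 r1 s0 s1

def IsTransitivePos {R A : Type u} [PartialOrder R] [PartialOrder A]
    (r0 r1 : R →o A) : Prop :=
  ∀ (S : Type u) [PartialOrder S] (s s' s'' : S →o A),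
    FactorsPos r0 r1 s s' → FactorsPos r0 r1 s' s'' → FactorsPos r0 r1 s s''

def relOfPair {R A : Type u} (r0 r1 : R → A) (x y : A) : Prop :=
  ∃ z, r0 z = x ∧ r1 z = y

section Subcongruence

variable {R A : Type u} [PartialOrder R] [PartialOrder A] {r0 r1 : R →o A}

theorem factorsPos_const_iff {x y : A} :
    FactorsPos r0 r1 (OrderHom.const PUnit x) (OrderHom.const PUnit y) ↔ relOfPair r0 r1 x y := by
  constructor
  · rintro ⟨t, ht0, ht1⟩
    exact ⟨t PUnit.unit, DFunLike.congr_fun ht0 _, DFunLike.congr_fun ht1 _⟩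
  · rintro ⟨z, rfl, rfl⟩
    exact ⟨OrderHom.const _ z, rfl, rfl⟩

theorem IsOrderReflexivePos.relOfPair_of_le (h : IsOrderReflexivePos r0 r1) {x y : A}
    (hxy : x ≤ y) : relOfPair r0 r1 x y :=
  factorsPos_const_iff.1 <| h PUnit _ _ fun _ => hxy

theorem IsTransitivePos.relOfPair_trans (h : IsTransitivePos r0 r1) {x y z : A}
    (hxy : relOfPair r0 r1 x y) (hyz : relOfPair r0 r1 y z) : relOfPair r0 r1 x z :=
  factorsPos_const_iff.1 <| h PUnit _ _ _ (factorsPos_const_iff.2 hxy) (factorsPos_const_iff.2 hyz)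

end Subcongruence

theorem exists_isPosetalReflectionMap {A : Type u} (sq : A → A → Prop) (hrefl : ∀ x, sq x x)
    (htrans : ∀ x y z, sq x y → sq y z → sq x z) :
    ∃ (C : Type u) (instC : PartialOrder C) (c : A → C), IsPosetalReflectionMap sq C instC c := by
  let _ : Preorder A := { le := sq, le_refl := hrefl, le_trans := htrans }
  exact ⟨Antisymmetrization A (· ≤ ·), inferInstance, toAntisymmetrization (· ≤ ·),
    Quotient.mk_surjective, fun _ _ => Iff.rfl⟩

namespace IsPosetalReflectionMap

variable {A C : Type u} {sq : A → A → Prop} [PartialOrder C] {c : A → C}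

theorem monotone [Preorder A] (hc : IsPosetalReflectionMap sq C inferInstance c)
    (hle : ∀ x y : A, x ≤ y → sq x y) : Monotone c :=
  fun x y hxy => (hc.2 x y).2 (hle x y hxy)

theorem exists_monotone_comp_eq (hc : IsPosetalReflectionMap sq C inferInstance c)
    {C' : Type*} [PartialOrder C'] (c' : A → C') (hc' : ∀ a b, sq a b → c' a ≤ c' b) :
    ∃ k : C → C', Monotone k ∧ ∀ a, k (c a) = c' a := by
  choose s hs using hc.1
  have hsq_iff {x y : A} : c x ≤ c y ↔ sq x y := hc.2 x y
  refine ⟨fun v => c' (s v), fun v w hvw => hc' _ _ ?_, fun a => ?_⟩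
  · rwa [← hsq_iff, hs, hs]
  · exact le_antisymm (hc' _ _ (hsq_iff.1 (hs _).le)) (hc' _ _ (hsq_iff.1 (hs _).ge))

end IsPosetalReflectionMap

/-- for a subcongruence `r0, r1` in `Pos`, the relation
`x ⊑ y ↔ ∃ z, r0 z = x ∧ r1 z = y` is a preorder containing the order of `A`, and the
quotient map onto the posetal reflection of `(A, ⊑)` is a coinserter of `r0, r1`. -/
theorem stmt13 {R A : Type u} [PartialOrder R] [PartialOrder A]
    (r0 r1 : R →o A) (h : IsSubcongruencePos r0 r1)
    (sq : A → A → Prop) (hsq : ∀ x y, sq x y ↔ ∃ z : R, r0 z = x ∧ r1 z = y) :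
    (∀ x, sq x x) ∧
    (∀ x y z, sq x y → sq y z → sq x z) ∧
    (∀ x y : A, x ≤ y → sq x y) ∧
    (∃ (C : Type u) (instC : PartialOrder C) (c : A → C),
      IsPosetalReflectionMap sq C instC c) ∧
    (∀ (C : Type u) [PartialOrder C] (c : A → C),
      IsPosetalReflectionMap sq C inferInstance c →
        (Monotone c ∧
         (∀ z : R, c (r0 z) ≤ c (r1 z)) ∧
         (∀ (C' : Type u) [PartialOrder C'] (c' : A →o C'),
            (∀ z : R, c' (r0 z) ≤ c' (r1 z)) →
              ∃ k : C → C', Monotone k ∧ ∀ a, k (c a) = c' a) ∧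
         (∀ (C' : Type u) [PartialOrder C'] (u0 u1 : C → C'),
            Monotone u0 → Monotone u1 → (∀ a, u0 (c a) ≤ u1 (c a)) →
              ∀ x, u0 x ≤ u1 x))) := by
  obtain rfl : sq = relOfPair r0 r1 := by
    ext x y
    exact hsq x y
  obtain ⟨-, hrefl, htrans⟩ : _ ∧ IsOrderReflexivePos r0 r1 ∧ IsTransitivePos r0 r1 := h
  have hle (x y : A) (hxy : x ≤ y) : relOfPair r0 r1 x y := hrefl.relOfPair_of_le hxy
  have htrans' (x y z : A) :
      relOfPair r0 r1 x y → relOfPair r0 r1 y z → relOfPair r0 r1 x z :=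
    htrans.relOfPair_trans
  refine ⟨fun x => hle x x le_rfl, htrans', hle,
    exists_isPosetalReflectionMap _ (fun x => hle x x le_rfl) htrans', ?_⟩
  intro C _ c hc
  refine ⟨hc.monotone hle, fun z => (hc.2 _ _).2 ⟨z, rfl, rfl⟩, ?_, ?_⟩
  · intro C' _ c' hc'
    exact hc.exists_monotone_comp_eq c' fun _ _ ⟨z, h0, h1⟩ => h0 ▸ h1 ▸ hc' z
  · intro C' _ u0 u1 _ _ hu
    exact hc.1.forall.2 hu

end Paper
end

section
/- Let K be an order-enriched category with coinserters of reflexive pairs. Then every object G of K that has copowers has tensors: for every poset P there is an object P⊗G of K together with order-isomorphisms K(P⊗G, X) ≅ Pos(P, K(G,X)), natural in X. -/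
/-!
Write `P·G` for the copower of `G` indexed by the elements of `P` and `E·G` for the one indexed
by the order relation `E = {(p, q) | p ≤ q}`. The two projections `E ⇉ P` induce a pair
`E·G ⇉ P·G`, reflexive via the diagonal `P → E`, and `P ⊗ G` is its coinserter `c`. A morphism
`g : P·G → X` is a family `(ι p ≫ g)_p` of maps `G → X`, and the coinserter condition on `g` says
exactly that this family is monotone in `p`; so `K(P ⊗ G, X)` is, via `f ↦ c ≫ f`, the poset of
monotone maps `P → K(G, X)`.
-/

open CategoryTheory

universe v u

namespace Paper

/- An order-enriched category: a category with a partial order on each hom-set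
such that composition is monotone in both variables. -/
variable {K : Type u} [Category.{v} K] [∀ X Y : K, PartialOrder (X ⟶ Y)]

/-- Composition is monotone in both variables. -/
def CompMonotone (K : Type u) [Category.{v} K] [∀ X Y : K, PartialOrder (X ⟶ Y)] : Prop :=
  ∀ (X Y Z : K) (f f' : X ⟶ Y) (g g' : Y ⟶ Z), f ≤ f' → g ≤ g' → f ≫ g ≤ f' ≫ g'

/-- `c` is a coinserter of the parallel pair `f0, f1`. -/
def IsCoinserterOf {X Y Z : K} (f0 f1 : X ⟶ Y) (c : Y ⟶ Z) : Prop :=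
  f0 ≫ c ≤ f1 ≫ c ∧
    (∀ (Z' : K) (c' : Y ⟶ Z'), f0 ≫ c' ≤ f1 ≫ c' → ∃ g : Z ⟶ Z', c ≫ g = c') ∧
    (∀ (U : K) (u0 u1 : Z ⟶ U), c ≫ u0 ≤ c ≫ u1 → u0 ≤ u1)

/-- A reflexive pair: a parallel pair with a joint splitting. -/
def ReflexivePair {X Y : K} (f0 f1 : X ⟶ Y) : Prop :=
  ∃ d : Y ⟶ X, d ≫ f0 = 𝟙 Y ∧ d ≫ f1 = 𝟙 Y

/-- A subregular epimorphism: a coinserter of a reflexive pair. -/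
def IsSubregularEpi {Y Z : K} (c : Y ⟶ Z) : Prop :=
  ∃ (X : K) (f0 f1 : X ⟶ Y), ReflexivePair f0 f1 ∧ IsCoinserterOf f0 f1 c

/-- `G` is a subregular projective: morphisms from `G` factor through subregular
epimorphisms. -/
def SubregularProjective (G : K) : Prop :=
  ∀ (A B : K) (e : A ⟶ B), IsSubregularEpi e → ∀ g : G ⟶ B, ∃ f : G ⟶ A, f ≫ e = g

/-- `r0, r1` is collectively order-reflecting. -/
def CollOrderReflecting {R A : K} (r0 r1 : R ⟶ A) : Prop :=
  ∀ (X : K) (f f' : X ⟶ R), f ≫ r0 ≤ f' ≫ r0 → f ≫ r1 ≤ f' ≫ r1 → f ≤ f'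

/-- `r0, r1` is the subkernel pair of `h`: the universal pair with `h∘r0 ≤ h∘r1`. -/
def IsSubkernelPairOf {R A B : K} (r0 r1 : R ⟶ A) (h : A ⟶ B) : Prop :=
  CollOrderReflecting r0 r1 ∧ r0 ≫ h ≤ r1 ≫ h ∧
    ∀ (V : K) (v0 v1 : V ⟶ A), v0 ≫ h ≤ v1 ≫ h →
      ∃ t : V ⟶ R, t ≫ r0 = v0 ∧ t ≫ r1 = v1

def HasSubkernelPairs (K : Type u) [Category.{v} K]
    [∀ X Y : K, PartialOrder (X ⟶ Y)] : Prop :=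
  ∀ (A B : K) (h : A ⟶ B), ∃ (R : K) (r0 r1 : R ⟶ A), IsSubkernelPairOf r0 r1 h

def HasCoinsertersOfSubkernelPairs (K : Type u) [Category.{v} K]
    [∀ X Y : K, PartialOrder (X ⟶ Y)] : Prop :=
  ∀ (R A B : K) (h : A ⟶ B) (r0 r1 : R ⟶ A), IsSubkernelPairOf r0 r1 h →
    ∃ (C : K) (c : A ⟶ C), IsCoinserterOf r0 r1 c

def HasReflexiveCoinserters (K : Type u) [Category.{v} K]
    [∀ X Y : K, PartialOrder (X ⟶ Y)] : Prop :=
  ∀ (X Y : K) (f0 f1 : X ⟶ Y), ReflexivePair f0 f1 →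
    ∃ (Z : K) (c : Y ⟶ Z), IsCoinserterOf f0 f1 c

/-- `G` is a strong generator in the enriched sense: the hom-functor
`K(G,−) : K → Pos` reflects isomorphisms. -/
def StrongGeneratorE (G : K) : Prop :=
  ∀ (A B : K) (h : A ⟶ B),
    Function.Bijective (fun f : G ⟶ A => f ≫ h) →
    (∀ f f' : G ⟶ A, f ≫ h ≤ f' ≫ h ↔ f ≤ f') → IsIso h

/-- `C` with injections `ι` is a copower `M·G` in the enriched sense: the canonical
map `K(M·G, X) → K(G,X)^M` is an order-isomorphism. -/
def IsEnrCopower (G : K) (M : Type v) (C : K) (ι : M → (G ⟶ C)) : Prop :=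
  (∀ (X : K) (g : M → (G ⟶ X)), ∃! d : C ⟶ X, ∀ m, ι m ≫ d = g m) ∧
  (∀ (X : K) (d d' : C ⟶ X), (∀ m, ι m ≫ d ≤ ι m ≫ d') → d ≤ d')

/-- `G` has copowers (with the enriched universal property). -/
def HasEnrCopowers (G : K) : Prop :=
  ∀ M : Type v, ∃ (C : K) (ι : M → (G ⟶ C)), IsEnrCopower G M C ι

/-- `G` is abstractly finite: every morphism from `G` into a copower `M·G` factors
through the subcopower induced by a finite subset `M₀ ⊆ M`. -/
def AbstractlyFiniteE (G : K) : Prop :=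
  ∀ (M : Type v) (C : K) (ι : M → (G ⟶ C)), IsEnrCopower G M C ι →
    ∀ f : G ⟶ C, ∃ M₀ : Set M, M₀.Finite ∧
      ∀ (C₀ : K) (ι₀ : M₀ → (G ⟶ C₀)) (u : C₀ ⟶ C),
        IsEnrCopower G M₀ C₀ ι₀ → (∀ m : M₀, ι₀ m ≫ u = ι m.1) →
          ∃ g : G ⟶ C₀, g ≫ u = f

/-- A subvarietal generator: a strong generator with copowers which is abstractly
finite and subregularly projective. -/
def SubvarietalGenerator (G : K) : Prop :=
  HasEnrCopowers G ∧ StrongGeneratorE G ∧ AbstractlyFiniteE G ∧ SubregularProjective G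

/-- The pair `s0, s1` factorizes through the relation `r0, r1`. -/
def FactorsE {R A S : K} (r0 r1 : R ⟶ A) (s0 s1 : S ⟶ A) : Prop :=
  ∃ t : S ⟶ R, t ≫ r0 = s0 ∧ t ≫ r1 = s1

/-- A subcongruence: an order-reflexive and transitive relation. -/
def IsSubcongruence {R A : K} (r0 r1 : R ⟶ A) : Prop :=
  CollOrderReflecting r0 r1 ∧
  (∀ (S : K) (s0 s1 : S ⟶ A), s0 ≤ s1 → FactorsE r0 r1 s0 s1) ∧
  (∀ (S : K) (s s' s'' : S ⟶ A),
    FactorsE r0 r1 s s' → FactorsE r0 r1 s' s'' → FactorsE r0 r1 s s'')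

def HasCoinsertersOfSubcongruences (K : Type u) [Category.{v} K]
    [∀ X Y : K, PartialOrder (X ⟶ Y)] : Prop :=
  ∀ (R A : K) (r0 r1 : R ⟶ A), IsSubcongruence r0 r1 →
    ∃ (C : K) (c : A ⟶ C), IsCoinserterOf r0 r1 c

/-- `K` has effective subcongruences: every subcongruence is a subkernel pair. -/
def EffectiveSubcongruences (K : Type u) [Category.{v} K]
    [∀ X Y : K, PartialOrder (X ⟶ Y)] : Prop :=
  ∀ (R A : K) (r0 r1 : R ⟶ A), IsSubcongruence r0 r1 →
    ∃ (B : K) (h : A ⟶ B), IsSubkernelPairOf r0 r1 h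

/-- A coinserter diagram in `Pos`. -/
def IsCoinserterOfPos {P Q Z : Type v} [PartialOrder P] [PartialOrder Q] [PartialOrder Z]
    (u v : P → Q) (q : Q → Z) : Prop :=
  (∀ p, q (u p) ≤ q (v p)) ∧
  (∀ (Z' : Type v) [PartialOrder Z'] (h : Q →o Z'), (∀ p, h (u p) ≤ h (v p)) →
      ∃ k : Z → Z', Monotone k ∧ ∀ x, k (q x) = h x) ∧
  (∀ (Z' : Type v) [PartialOrder Z'] (k0 k1 : Z →o Z'),
      (∀ x, k0 (q x) ≤ k1 (q x)) → k0 ≤ k1)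

/-- `G` is subeffective: its hom-functor `K(G,−) : K → Pos` sends coinserters of
subcongruences to coinserters in `Pos`. -/
def SubeffectiveObject (G : K) : Prop :=
  ∀ (R A : K) (r0 r1 : R ⟶ A), IsSubcongruence r0 r1 →
    ∀ (C : K) (c : A ⟶ C), IsCoinserterOf r0 r1 c →
      IsCoinserterOfPos (fun f : G ⟶ R => f ≫ r0) (fun f : G ⟶ R => f ≫ r1)
        (fun g : G ⟶ A => g ≫ c)

/-- `m` is an embedding: `m∘u0 ≤ m∘u1` implies `u0 ≤ u1`. -/
def EmbeddingMor {C B : K} (m : C ⟶ B) : Prop :=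
  ∀ (U : K) (u0 u1 : U ⟶ C), u0 ≫ m ≤ u1 ≫ m → u0 ≤ u1

/-- The square with projections `f', e'` is a pullback of `e` along `f`. -/
def IsPullbackOfE {P A B Q : K} (f' : P ⟶ A) (e' : P ⟶ B) (e : A ⟶ Q) (f : B ⟶ Q) : Prop :=
  f' ≫ e = e' ≫ f ∧
    ∀ (S : K) (a : S ⟶ A) (b : S ⟶ B), a ≫ e = b ≫ f →
      ∃! t : S ⟶ P, t ≫ f' = a ∧ t ≫ e' = b


theorem CompMonotone.comp_le_comp_left (hcomp : CompMonotone K) {X Y Z : K} (f : X ⟶ Y)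
    {g g' : Y ⟶ Z} (h : g ≤ g') : f ≫ g ≤ f ≫ g' :=
  hcomp _ _ _ _ _ _ _ le_rfl h

theorem CompMonotone.comp_le_comp_right (hcomp : CompMonotone K) {X Y Z : K} {f f' : X ⟶ Y}
    (h : f ≤ f') (g : Y ⟶ Z) : f ≫ g ≤ f' ≫ g :=
  hcomp _ _ _ _ _ _ _ h le_rfl

namespace IsEnrCopower

variable {G C : K} {M : Type v} {ι : M → (G ⟶ C)} (hC : IsEnrCopower G M C ι)
include hC

noncomputable def desc {X : K} (g : M → (G ⟶ X)) : C ⟶ X :=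
  (hC.1 X g).exists.choose

theorem ι_desc {X : K} (g : M → (G ⟶ X)) (m : M) : ι m ≫ hC.desc g = g m :=
  (hC.1 X g).exists.choose_spec m

theorem hom_ext {X : K} {d d' : C ⟶ X} (h : ∀ m, ι m ≫ d = ι m ≫ d') : d = d' :=
  le_antisymm (hC.2 X d d' fun m => (h m).le) (hC.2 X d' d fun m => (h m).ge)

theorem le_iff (hcomp : CompMonotone K) {X : K} {d d' : C ⟶ X} :
    d ≤ d' ↔ ∀ m, ι m ≫ d ≤ ι m ≫ d' :=
  ⟨fun h _ => hcomp.comp_le_comp_left _ h, hC.2 X d d'⟩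

theorem reflexivePair_desc {N : Type v} {D : K} {κ : N → (G ⟶ D)} (hD : IsEnrCopower G N D κ)
    (s t : N → M) (r : M → N) (hs : ∀ m, s (r m) = m) (ht : ∀ m, t (r m) = m) :
    ReflexivePair (hD.desc (ι ∘ s)) (hD.desc (ι ∘ t)) := by
  refine ⟨hC.desc (κ ∘ r), hC.hom_ext fun _ => ?_, hC.hom_ext fun _ => ?_⟩ <;>
    simp [← Category.assoc, ι_desc, hs, ht]

end IsEnrCopower

namespace IsCoinserterOf

variable {X Y Z : K} {f0 f1 : X ⟶ Y} {c : Y ⟶ Z}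

theorem hom_ext (hc : IsCoinserterOf f0 f1 c) {U : K} {u0 u1 : Z ⟶ U} (h : c ≫ u0 = c ≫ u1) :
    u0 = u1 :=
  le_antisymm (hc.2.2 U u0 u1 h.le) (hc.2.2 U u1 u0 h.ge)

theorem condition_comp (hcomp : CompMonotone K) (hc : IsCoinserterOf f0 f1 c) {U : K}
    (u : Z ⟶ U) : f0 ≫ c ≫ u ≤ f1 ≫ c ≫ u := by
  simpa only [Category.assoc] using hcomp.comp_le_comp_right hc.1 u

theorem comp_le_comp_iff (hcomp : CompMonotone K) (hc : IsCoinserterOf f0 f1 c) {U : K}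
    {u0 u1 : Z ⟶ U} : c ≫ u0 ≤ c ≫ u1 ↔ u0 ≤ u1 :=
  ⟨hc.2.2 U u0 u1, hcomp.comp_le_comp_left c⟩

noncomputable def homOrderIso (hcomp : CompMonotone K) (hc : IsCoinserterOf f0 f1 c) (U : K) :
    (Z ⟶ U) ≃o {g : Y ⟶ U // f0 ≫ g ≤ f1 ≫ g} where
  toFun u := ⟨c ≫ u, hc.condition_comp hcomp u⟩
  invFun g := (hc.2.1 U g g.2).choose
  left_inv u := hc.hom_ext (hc.2.1 U _ (hc.condition_comp hcomp u)).choose_spec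
  right_inv g := Subtype.ext (hc.2.1 U g g.2).choose_spec
  map_rel_iff' := hc.comp_le_comp_iff hcomp

end IsCoinserterOf

section OrderCopower

variable {G C D : K} {P : Type v} [PartialOrder P] {ι : P → (G ⟶ C)}
  {κ : {pq : P × P // pq.1 ≤ pq.2} → (G ⟶ D)}

theorem IsEnrCopower.desc_fst_comp_le_desc_snd_comp_iff
    (hD : IsEnrCopower G {pq : P × P // pq.1 ≤ pq.2} D κ) (hcomp : CompMonotone K) {X : K}
    (g : C ⟶ X) :
    hD.desc (fun e => ι e.1.1) ≫ g ≤ hD.desc (fun e => ι e.1.2) ≫ g ↔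
      Monotone fun p => ι p ≫ g := by
  simp only [hD.le_iff hcomp, ← Category.assoc, hD.ι_desc]
  exact ⟨fun h p q hpq => h ⟨(p, q), hpq⟩, fun h e => h e.2⟩

noncomputable def IsEnrCopower.monotoneOrderIso (hC : IsEnrCopower G P C ι)
    (hD : IsEnrCopower G {pq : P × P // pq.1 ≤ pq.2} D κ) (hcomp : CompMonotone K) (X : K) :
    {g : C ⟶ X // hD.desc (fun e => ι e.1.1) ≫ g ≤ hD.desc (fun e => ι e.1.2) ≫ g} ≃o
      (P →o (G ⟶ X)) where
  toFun g := ⟨fun p => ι p ≫ g.1, (hD.desc_fst_comp_le_desc_snd_comp_iff hcomp g.1).1 g.2⟩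
  invFun h := ⟨hC.desc h, (hD.desc_fst_comp_le_desc_snd_comp_iff hcomp _).2 (by
    simpa only [hC.ι_desc] using h.monotone)⟩
  left_inv g := Subtype.ext (hC.hom_ext fun p => hC.ι_desc _ p)
  right_inv h := OrderHom.ext _ _ (funext fun p => hC.ι_desc h p)
  map_rel_iff' := (hC.le_iff hcomp).symm

end OrderCopower

/-- in an order-enriched category with coinserters of reflexive pairs,
every object with copowers has tensors: for every poset `P` there is an object `P⊗G`
with order-isomorphisms `K(P⊗G, X) ≅ Pos(P, K(G,X))` natural in `X`. -/
theorem stmt14 {K : Type u} [Category.{v} K] [∀ X Y : K, PartialOrder (X ⟶ Y)]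
    (hcomp : CompMonotone K) (hcoins : HasReflexiveCoinserters K)
    (G : K) (hcop : HasEnrCopowers G) (P : Type v) [PartialOrder P] :
    ∃ (T : K) (φ : ∀ X : K, (T ⟶ X) → (P →o (G ⟶ X))),
      (∀ X : K, Function.Bijective (φ X)) ∧
      (∀ (X : K) (f f' : T ⟶ X), f ≤ f' ↔ φ X f ≤ φ X f') ∧
      (∀ (X X' : K) (u : X ⟶ X') (f : T ⟶ X) (p : P),
        (φ X' (f ≫ u)) p = (φ X f) p ≫ u) := by
  obtain ⟨C, ι, hC⟩ := hcop P
  obtain ⟨D, κ, hD⟩ := hcop {pq : P × P // pq.1 ≤ pq.2}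
  obtain ⟨T, c, hc⟩ := hcoins D C _ _ <| hC.reflexivePair_desc hD (fun e => e.1.1)
    (fun e => e.1.2) (fun p => ⟨(p, p), le_rfl⟩) (fun _ => rfl) (fun _ => rfl)
  let φ X := (hc.homOrderIso hcomp X).trans (hC.monotoneOrderIso hD hcomp X)
  refine ⟨T, fun X => φ X, fun X => (φ X).bijective, fun X f f' => (φ X).le_iff_le.symm,
    fun X X' u f p => ?_⟩
  simp [φ, IsCoinserterOf.homOrderIso, IsEnrCopower.monotoneOrderIso]

end Paper
end

section
/- Let K be an order-enriched category with subkernel pairs and their coinserters, and let G be a subregularly projective strong generator with copowers. Then subregular epimorphisms are stable under pullback in K: in any pullback square with one side a subregular epimorphism e, the side e' opposite to e is also a subregular epimorphism. -/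
open CategoryTheory

universe v u

namespace Paper

/- An order-enriched category: a category with a partial order on each hom-set
such that composition is monotone in both variables. -/
variable {K : Type u} [Category.{v} K] [∀ X Y : K, PartialOrder (X ⟶ Y)]

/-- in an order-enriched category with subkernel pairs and their
coinserters, with a subregularly projective strong generator with copowers,
subregular epimorphisms are stable under pullback. -/
theorem stmt15 {K : Type u} [Category.{v} K] [∀ X Y : K, PartialOrder (X ⟶ Y)]
    (hcomp : CompMonotone K)
    (hskp : HasSubkernelPairs K) (hcoins : HasCoinsertersOfSubkernelPairs K)
    (G : K) (hcop : HasEnrCopowers G) (hproj : SubregularProjective G)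
    (hstrong : StrongGeneratorE G) :
    ∀ (P A B Q : K) (f' : P ⟶ A) (e' : P ⟶ B) (e : A ⟶ Q) (f : B ⟶ Q),
      IsPullbackOfE f' e' e f → IsSubregularEpi e → IsSubregularEpi e' := by
  intro P A B Q f' e' e f hpb he
  obtain ⟨R, r0, r1, hrefl, hle, huniv⟩ := hskp P B e'
  obtain ⟨C, c, hcle, hcfact, hcref⟩ :=
    hcoins R P B e' r0 r1 ⟨hrefl, hle, huniv⟩
  obtain ⟨d, hd0, hd1⟩ := huniv P (𝟙 P) (𝟙 P) le_rfl
  have hcsub : IsSubregularEpi c :=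
    ⟨R, r0, r1, ⟨d, hd0, hd1⟩, hcle, hcfact, hcref⟩
  obtain ⟨m, hm⟩ := hcfact B e' hle
  have hsurj : ∀ g : G ⟶ B, ∃ u : G ⟶ C, u ≫ m = g := by
    intro g
    obtain ⟨a, ha⟩ := hproj A Q e he (g ≫ f)
    obtain ⟨t, ⟨ht1, ht2⟩, _⟩ := hpb.2 G a g (by rw [ha])
    exact ⟨t ≫ c, by rw [Category.assoc, hm, ht2]⟩
  have hrefle : ∀ u u' : G ⟶ C, u ≫ m ≤ u' ≫ m → u ≤ u' := by
    intro u u' hle'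
    obtain ⟨p, hp⟩ := hproj P C c hcsub u
    obtain ⟨p', hp'⟩ := hproj P C c hcsub u'
    have hpe : p ≫ e' ≤ p' ≫ e' := by
      rw [← hm, ← Category.assoc, ← Category.assoc, hp, hp']
      exact hle'
    obtain ⟨t, ht0, ht1⟩ := huniv G p p' hpe
    calc u = t ≫ r0 ≫ c := by rw [← Category.assoc, ht0, hp]
      _ ≤ t ≫ r1 ≫ c := hcomp G R C t t _ _ le_rfl hcle
      _ = u' := by rw [← Category.assoc, ht1, hp']
  have hiso : IsIso m := by
    apply hstrong C B m
    · constructor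
      · intro u u' h
        exact le_antisymm (hrefle _ _ (le_of_eq h)) (hrefle _ _ (le_of_eq h.symm))
      · intro g
        exact hsurj g
    · intro u u'
      exact ⟨hrefle u u', fun h => hcomp G C B u u' m m h le_rfl⟩
  refine ⟨R, r0, r1, ⟨d, hd0, hd1⟩, ?_, ?_, ?_⟩
  · rw [← hm, ← Category.assoc, ← Category.assoc]
    exact hcomp R C B _ _ m m hcle le_rfl
  · intro Z' c' hle'
    obtain ⟨g, hg⟩ := hcfact Z' c' hle'
    refine ⟨inv m ≫ g, ?_⟩
    rw [← hm]
    simp [hg]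
  · intro U u0 u1 h
    have h2 : c ≫ (m ≫ u0) ≤ c ≫ (m ≫ u1) := by
      rw [← Category.assoc, ← Category.assoc, hm]
      exact h
    have h3 := hcref U (m ≫ u0) (m ≫ u1) h2
    have h4 := hcomp B C U (inv m) (inv m) _ _ le_rfl h3
    simpa using h4

end Paper
end
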